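/- arXiv:1509.06712 — 9 statements merged into one kernel-verified Lean document; each statement's English description precedes it below -/
import Mathlib

section
/- Let W ≥ 0 be a total weight and let bins j = 1,…,m have capacities C_j > 0, fixed costs f_j ≥ 0, and unit costs c_j ≥ 0, with Σ_j C_j ≥ W. Define r_j = f_j/C_j + c_j. Then for any nonnegative loads l_1,…,l_m with l_j ≤ C_j for all j and Σ_j l_j = W, we have Σ_j r_j l_j ≥ Lb1, where Lb1 = Σ_{j=1}^{k-1} C_{a_j} r_{a_j} + (W − Σ_{j=1}^{k-1} C_{a_j}) r_{a_k}, the indices a_1,…,a_m sort the bins by non-decreasing r, and k is the minimum number of bins such that Σ_{j=1}^{k} C_{a_j} ≥ W. -/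
/-!
Sort the bins by rate, `ρ j = r (a j)`, and let `g` be the greedy filling: bins before `k` full,
bin `k` holding the rest of `W`; then `Lb1 = ∑ ρ j * g j`. The sorted loads `x j = l (a j)` have
`x j - g j ≤ 0` before `k`, `≥ 0` after `k`, and total `0`. Hence
`∑ ρ j (x j - g j) = ∑ (ρ j - ρ k) (x j - g j) ≥ 0`, every term being a product of two factors of
the same sign.
-/

open Finset

section

variable {ι R : Type*} [Fintype ι] [LinearOrder ι] [CommRing R]

def greedyLoad (D : ι → R) (W : R) (k : ι) (j : ι) : R :=
  if j < k then D j else if j = k then W - ∑ i ∈ univ.filter (· < k), D i else 0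

theorem sum_mul_greedyLoad (D ρ : ι → R) (W : R) (k : ι) :
    ∑ j, ρ j * greedyLoad D W k j
      = ∑ j ∈ univ.filter (· < k), D j * ρ j + (W - ∑ j ∈ univ.filter (· < k), D j) * ρ k := by
  have hterm : ∀ j, ρ j * greedyLoad D W k j
      = (if j < k then D j * ρ j else 0)
        + if j = k then (W - ∑ i ∈ univ.filter (· < k), D i) * ρ k else 0 := by
    intro j
    rcases lt_trichotomy j k with hj | rfl | hj
    · simp [greedyLoad, hj, hj.ne, mul_comm]
    · simp [greedyLoad, mul_comm]
    · simp [greedyLoad, hj.not_gt, hj.ne']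
  simp only [hterm, sum_add_distrib, sum_ite_eq', mem_univ, if_true, sum_ite, sum_const_zero,
    add_zero]

theorem sum_greedyLoad (D : ι → R) (W : R) (k : ι) : ∑ j, greedyLoad D W k j = W := by
  simpa using sum_mul_greedyLoad D 1 W k

variable [LinearOrder R] [IsStrictOrderedRing R]

theorem sum_mul_nonneg_of_monotone_of_sign_change {ρ y : ι → R} (hρ : Monotone ρ) (k : ι)
    (hlt : ∀ j < k, y j ≤ 0) (hgt : ∀ j, k < j → 0 ≤ y j) (hsum : ∑ j, y j = 0) :
    0 ≤ ∑ j, ρ j * y j := by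
  have hsplit : ∑ j, ρ j * y j = ∑ j, (ρ j - ρ k) * y j + ρ k * ∑ j, y j := by
    rw [mul_sum, ← sum_add_distrib]
    exact sum_congr rfl fun j _ => by ring
  rw [hsplit, hsum, mul_zero, add_zero]
  refine sum_nonneg fun j _ => ?_
  rcases lt_trichotomy j k with hj | rfl | hj
  · exact mul_nonneg_of_nonpos_of_nonpos (sub_nonpos.2 (hρ hj.le)) (hlt j hj)
  · simp
  · exact mul_nonneg (sub_nonneg.2 (hρ hj.le)) (hgt j hj)

end

theorem stmt0_general (m : ℕ) (W : ℝ) (C : Fin m → ℝ)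
    (r : Fin m → ℝ)
    (a : Equiv.Perm (Fin m)) (ha : Monotone fun j => r (a j))
    (k : Fin m)
    (l : Fin m → ℝ) (hl0 : ∀ j, 0 ≤ l j) (hlC : ∀ j, l j ≤ C j)
    (hlW : ∑ j, l j = W) :
    (∑ j ∈ univ.filter (fun j => j < k), C (a j) * r (a j))
      + (W - ∑ j ∈ univ.filter (fun j => j < k), C (a j)) * r (a k)
      ≤ ∑ j, r j * l j := by
  set g := greedyLoad (C ∘ a) W k
  have hdiff : 0 ≤ ∑ j, r (a j) * (l (a j) - g j) := by
    refine sum_mul_nonneg_of_monotone_of_sign_change ha k (fun j hj => ?_) (fun j hj => ?_) ?_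
    · simpa [g, greedyLoad, hj] using hlC (a j)
    · simpa [g, greedyLoad, hj.not_gt, hj.ne'] using hl0 (a j)
    · rw [sum_sub_distrib, Equiv.sum_comp a l, hlW, sum_greedyLoad, sub_self]
  calc _ = ∑ j, r (a j) * g j := (sum_mul_greedyLoad _ _ W k).symm
    _ ≤ ∑ j, r (a j) * l (a j) := by simpa [mul_sub, sub_nonneg] using hdiff
    _ = ∑ j, r j * l j := Equiv.sum_comp a fun j => r j * l j

/-- The greedy quantity `Lb1` is a lower bound on `∑ r_j l_j` for any
feasible fractional load vector `l` with `0 ≤ l_j ≤ C_j` and `∑ l_j = W`. -/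
theorem stmt0 (m : ℕ) (W : ℝ) (C f c : Fin m → ℝ)
    (hW : 0 ≤ W)
    (hC : ∀ j, 0 < C j) (hf : ∀ j, 0 ≤ f j) (hc : ∀ j, 0 ≤ c j)
    (hcap : W ≤ ∑ j, C j)
    (r : Fin m → ℝ) (hr : ∀ j, r j = f j / C j + c j)
    (a : Equiv.Perm (Fin m)) (ha : Monotone fun j => r (a j))
    (k : Fin m)
    (hk : W ≤ ∑ j ∈ univ.filter (fun j => j ≤ k), C (a j))
    (hkmin : ∑ j ∈ univ.filter (fun j => j < k), C (a j) < W)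
    (l : Fin m → ℝ) (hl0 : ∀ j, 0 ≤ l j) (hlC : ∀ j, l j ≤ C j)
    (hlW : ∑ j, l j = W) :
    (∑ j ∈ univ.filter (fun j => j < k), C (a j) * r (a j))
      + (W - ∑ j ∈ univ.filter (fun j => j < k), C (a j)) * r (a k)
      ≤ ∑ j, r j * l j :=
  stmt0_general m W C r a ha k l hl0 hlC hlW
end

section
/- Consider the LP relaxation of the basic BPUC formulation: minimize Σ_j (f_j y_j + c_j l_j) subject to Σ_j x_{ij} = 1 for each item i, Σ_i w_i x_{ij} = l_j for each bin j, l_j ≤ C_j y_j, with 0 ≤ x_{ij} ≤ 1, 0 ≤ y_j ≤ 1, l_j ≥ 0. Then any feasible solution of this LP has objective value at least Lb1, where Lb1 is defined via the sorted ratios r_j = f_j/C_j + c_j and W = Σ_i w_i. -/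
open Finset

/-- every feasible solution of the LP relaxation of the basic BPUC
formulation has objective value at least `Lb1`. -/
theorem stmt1 (m n : ℕ) (C f c : Fin m → ℝ) (w : Fin n → ℝ)
    (hw : ∀ i, 0 < w i)
    (hC : ∀ j, 0 < C j) (hf : ∀ j, 0 ≤ f j) (hc : ∀ j, 0 ≤ c j)
    (W : ℝ) (hW : W = ∑ i, w i) (hcap : W ≤ ∑ j, C j)
    (r : Fin m → ℝ) (hr : ∀ j, r j = f j / C j + c j)
    (a : Equiv.Perm (Fin m)) (ha : Monotone fun j => r (a j))
    (k : Fin m)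
    (hk : W ≤ ∑ j ∈ univ.filter (fun j => j ≤ k), C (a j))
    (hkmin : ∑ j ∈ univ.filter (fun j => j < k), C (a j) < W)
    (x : Fin n → Fin m → ℝ) (y l : Fin m → ℝ)
    (hx0 : ∀ i j, 0 ≤ x i j) (hx1 : ∀ i j, x i j ≤ 1)
    (hy0 : ∀ j, 0 ≤ y j) (hy1 : ∀ j, y j ≤ 1)
    (hl0 : ∀ j, 0 ≤ l j)
    (hassign : ∀ i, ∑ j, x i j = 1)
    (hload : ∀ j, ∑ i, w i * x i j = l j)
    (hcapy : ∀ j, l j ≤ C j * y j) :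
    (∑ j ∈ univ.filter (fun j => j < k), C (a j) * r (a j))
      + (W - ∑ j ∈ univ.filter (fun j => j < k), C (a j)) * r (a k)
      ≤ ∑ j, (f j * y j + c j * l j) := by
  classical
  set S := ∑ j ∈ univ.filter (fun j => j < k), C (a j) with hS
  -- total load equals W
  have hsuml : ∑ j, l j = W := by
    rw [hW]
    calc ∑ j, l j = ∑ j, ∑ i, w i * x i j := by
          exact Finset.sum_congr rfl fun j _ => (hload j).symm
    _ = ∑ i, ∑ j, w i * x i j := Finset.sum_comm
    _ = ∑ i, w i := by
        refine Finset.sum_congr rfl fun i _ => ?_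
        rw [← Finset.mul_sum, hassign, mul_one]
  have hlC : ∀ j, l j ≤ C j := fun j =>
    (hcapy j).trans (by nlinarith [hy1 j, (hC j).le])
  have hstep : ∀ j, r j * l j ≤ f j * y j + c j * l j := by
    intro j
    rw [hr]
    have h1 : f j / C j * l j ≤ f j * y j := by
      rw [div_mul_eq_mul_div, div_le_iff₀ (hC j)]
      nlinarith [hcapy j, hf j]
    nlinarith
  have hmain : ∑ j, r j * l j ≤ ∑ j, (f j * y j + c j * l j) :=
    Finset.sum_le_sum fun j _ => hstep j
  refine le_trans ?_ hmain
  have hre : ∑ j, r j * l j = ∑ j, r (a j) * l (a j) :=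
    (Equiv.sum_comp a (fun j => r j * l j)).symm
  rw [hre]
  set u : Fin m → ℝ := fun j => if j < k then C (a j) else if j = k then W - S else 0 with hu
  have hsumu : ∑ j, u j = W := by
    rw [← Finset.sum_filter_add_sum_filter_not univ (fun j => j < k) u]
    have h1 : ∑ j ∈ univ.filter (fun j => j < k), u j = S := by
      refine Finset.sum_congr rfl fun j hj => ?_
      simp only [Finset.mem_filter] at hj
      simp [hu, hj.2]
    have h2 : ∑ j ∈ univ.filter (fun j => ¬ j < k), u j = W - S := by
      have : ∀ j ∈ univ.filter (fun j => ¬ j < k), u j = if j = k then W - S else 0 := by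
        intro j hj
        simp only [Finset.mem_filter] at hj
        simp [hu, hj.2]
      rw [Finset.sum_congr rfl this, Finset.sum_ite_eq' _ k (fun _ => W - S)]
      simp
    rw [h1, h2]; ring
  have hLHS : S ≤ W → ((∑ j ∈ univ.filter (fun j => j < k), C (a j) * r (a j))
      + (W - S) * r (a k)) = ∑ j, u j * r (a j) := by
    intro _
    rw [← Finset.sum_filter_add_sum_filter_not univ (fun j => j < k)
      (fun j => u j * r (a j))]
    have h1 : ∑ j ∈ univ.filter (fun j => j < k), u j * r (a j)
        = ∑ j ∈ univ.filter (fun j => j < k), C (a j) * r (a j) := by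
      refine Finset.sum_congr rfl fun j hj => ?_
      simp only [Finset.mem_filter] at hj
      simp [hu, hj.2]
    have h2 : ∑ j ∈ univ.filter (fun j => ¬ j < k), u j * r (a j) = (W - S) * r (a k) := by
      have : ∀ j ∈ univ.filter (fun j => ¬ j < k), u j * r (a j)
          = if j = k then (W - S) * r (a k) else 0 := by
        intro j hj
        simp only [Finset.mem_filter] at hj
        by_cases h : j = k
        · subst h; simp [hu, hj.2]
        · simp [hu, hj.2, h]
      rw [Finset.sum_congr rfl this, Finset.sum_ite_eq' _ k (fun _ => (W - S) * r (a k))]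
      simp
    rw [h1, h2]
  rw [hLHS hkmin.le]
  have hsla : ∑ j, l (a j) = W := by
    rw [Equiv.sum_comp a l]; exact hsuml
  have key : ∀ j, 0 ≤ (l (a j) - u j) * (r (a j) - r (a k)) := by
    intro j
    rcases lt_trichotomy j k with h | h | h
    · have hu' : u j = C (a j) := by simp [hu, h]
      have h1 : l (a j) - u j ≤ 0 := by rw [hu']; linarith [hlC (a j)]
      have h2 : r (a j) - r (a k) ≤ 0 := by
        have := ha h.le; simpa using sub_nonpos.mpr this
      nlinarith
    · subst h; simp
    · have hu' : u j = 0 := by simp [hu, h, not_lt_of_gt h, Fin.ne_of_gt h]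
      have h1 : 0 ≤ l (a j) - u j := by rw [hu']; simpa using hl0 (a j)
      have h2 : 0 ≤ r (a j) - r (a k) := by
        have := ha h.le; simpa using sub_nonneg.mpr this
      exact mul_nonneg h1 h2
  have hsum : 0 ≤ ∑ j, (l (a j) - u j) * (r (a j) - r (a k)) :=
    Finset.sum_nonneg fun j _ => key j
  have expand : ∑ j, (l (a j) - u j) * (r (a j) - r (a k))
      = (∑ j, r (a j) * l (a j)) - (∑ j, u j * r (a j))
        - r (a k) * ((∑ j, l (a j)) - ∑ j, u j) := by
    have e1 : ∀ j : Fin m, (l (a j) - u j) * (r (a j) - r (a k))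
        = r (a j) * l (a j) - u j * r (a j) - (r (a k) * l (a j) - r (a k) * u j) := by
      intro j; ring
    simp only [e1]
    rw [Finset.sum_sub_distrib, Finset.sum_sub_distrib, Finset.sum_sub_distrib,
      ← Finset.mul_sum, ← Finset.mul_sum, mul_sub]
  rw [hsla, hsumu, sub_self, mul_zero, sub_zero] at expand
  linarith [hsum, expand]
end

section
/- In the BPUC LP relaxation augmented with the constraints x_{ij} ≤ y_j, if W ≥ C_{a_k} (where a_k is the critical bin in the sorted order by r_j), then the optimal value of the augmented LP still equals Lb1; i.e., the additional variable-upper-bound constraints do not strengthen the relaxation in this case. -/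
open Finset

private lemma gsum {m : ℕ} (k : Fin m) (D : Fin m → ℝ) (t : ℝ) (F : Fin m → ℝ) :
    ∑ j, F j * (if j < k then D j else if j = k then t else 0)
      = (∑ j ∈ univ.filter (fun j => j < k), F j * D j) + F k * t := by
  have h : ∀ j : Fin m, F j * (if j < k then D j else if j = k then t else 0)
      = (if j < k then F j * D j else 0) + (if j = k then F j * t else 0) := by
    intro j
    rcases lt_trichotomy j k with h | h | h
    · simp [h, ne_of_lt h]
    · simp [h]
    · simp [not_lt_of_gt h, ne_of_gt h]
  rw [Finset.sum_congr rfl fun j _ => h j, Finset.sum_add_distrib, ← Finset.sum_filter]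
  congr 1
  rw [Finset.sum_ite_eq' univ k (fun j => F j * t)]
  simp

private lemma knap {m : ℕ} (k : Fin m) (R D L : Fin m → ℝ) (t W : ℝ)
    (hmono : Monotone R)
    (hL0 : ∀ j, 0 ≤ L j) (hLD : ∀ j, L j ≤ D j)
    (hsum : ∑ j, L j = W)
    (hWt : (∑ j ∈ univ.filter (fun j => j < k), D j) + t = W) :
    (∑ j ∈ univ.filter (fun j => j < k), R j * D j) + R k * t ≤ ∑ j, R j * L j := by
  set g : Fin m → ℝ := fun j => if j < k then D j else if j = k then t else 0 with hg
  have hRg : ∑ j, R j * g j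
      = (∑ j ∈ univ.filter (fun j => j < k), R j * D j) + R k * t := gsum k D t R
  have hg_sum : ∑ j, g j = W := by
    have := gsum k D t (fun _ => (1 : ℝ))
    simpa [hWt] using this
  have key : 0 ≤ ∑ j, (R j - R k) * (L j - g j) := by
    apply Finset.sum_nonneg
    intro j _
    rcases lt_trichotomy j k with h | h | h
    · have h1 : R j - R k ≤ 0 := sub_nonpos.2 (hmono h.le)
      have h2 : L j - g j ≤ 0 := by
        simp only [hg, if_pos h]
        exact sub_nonpos.2 (hLD j)
      nlinarith
    · simp [h]
    · have h1 : 0 ≤ R j - R k := sub_nonneg.2 (hmono h.le)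
      have h2 : 0 ≤ L j - g j := by
        simp only [hg, if_neg (not_lt_of_gt h), if_neg (ne_of_gt h)]
        simpa using hL0 j
      exact mul_nonneg h1 h2
  have expand : ∑ j, (R j - R k) * (L j - g j)
      = ∑ j, R j * L j - ∑ j, R j * g j - R k * (∑ j, L j) + R k * (∑ j, g j) := by
    rw [Finset.mul_sum, Finset.mul_sum, ← Finset.sum_sub_distrib, ← Finset.sum_sub_distrib,
      ← Finset.sum_add_distrib]
    exact Finset.sum_congr rfl fun j _ => by ring
  rw [expand, hsum, hg_sum, hRg] at key
  linarith

/-- if `W ≥ C_{a_k}`, adding the constraints `x_{ij} ≤ y_j` to the BPUC LP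
relaxation does not change its optimal value, which is still `Lb1`. -/
theorem stmt3 (m n : ℕ) (C f c : Fin m → ℝ) (w : Fin n → ℝ)
    (hw : ∀ i, 0 < w i)
    (hC : ∀ j, 0 < C j) (hf : ∀ j, 0 ≤ f j) (hc : ∀ j, 0 ≤ c j)
    (W : ℝ) (hW : W = ∑ i, w i) (hW0 : 0 < W) (hcap : W ≤ ∑ j, C j)
    (r : Fin m → ℝ) (hr : ∀ j, r j = f j / C j + c j)
    (a : Equiv.Perm (Fin m)) (ha : Monotone fun j => r (a j))
    (k : Fin m)
    (hk : W ≤ ∑ j ∈ univ.filter (fun j => j ≤ k), C (a j))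
    (hkmin : ∑ j ∈ univ.filter (fun j => j < k), C (a j) < W)
    (hWk : C (a k) ≤ W) :
    IsLeast
      {z : ℝ | ∃ (x : Fin n → Fin m → ℝ) (y l : Fin m → ℝ),
        (∀ i j, 0 ≤ x i j) ∧ (∀ i j, x i j ≤ 1) ∧
        (∀ j, 0 ≤ y j) ∧ (∀ j, y j ≤ 1) ∧
        (∀ j, 0 ≤ l j) ∧
        (∀ i, ∑ j, x i j = 1) ∧
        (∀ j, ∑ i, w i * x i j = l j) ∧
        (∀ j, l j ≤ C j * y j) ∧
        (∀ i j, x i j ≤ y j) ∧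
        z = ∑ j, (f j * y j + c j * l j)}
      ((∑ j ∈ univ.filter (fun j => j < k), C (a j) * r (a j))
        + (W - ∑ j ∈ univ.filter (fun j => j < k), C (a j)) * r (a k)) := by
  set S := ∑ j ∈ univ.filter (fun j => j < k), C (a j) with hSdef
  have hS0 : 0 ≤ S := Finset.sum_nonneg fun j _ => (hC (a j)).le
  have hSW : S < W := hkmin
  have htC : W - S ≤ C (a k) := by
    have hsplit : univ.filter (fun j : Fin m => j ≤ k)
        = insert k (univ.filter (fun j => j < k)) := by
      ext j
      simp [le_iff_lt_or_eq, or_comm]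
    rw [hsplit, Finset.sum_insert (by simp)] at hk
    linarith
  have hCS : ∀ i : Fin m, i < k → C (a i) ≤ S := by
    intro i hi
    exact Finset.single_le_sum (fun j _ => (hC (a j)).le) (by simp [hi])
  have htarget : (∑ j ∈ univ.filter (fun j => j < k), C (a j) * r (a j)) + (W - S) * r (a k)
      = (∑ j ∈ univ.filter (fun j => j < k), r (a j) * C (a j)) + r (a k) * (W - S) := by
    rw [Finset.sum_congr rfl fun j _ => mul_comm (C (a j)) (r (a j)), mul_comm]
  constructor
  · -- membership: the greedy solution
    set l : Fin m → ℝ := fun j =>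
      if a.symm j < k then C j else if a.symm j = k then W - S else 0 with hldef
    have hla : ∀ j : Fin m, l (a j) = if j < k then C (a j) else if j = k then W - S else 0 := by
      intro j; simp [hldef]
    have hl0 : ∀ j, 0 ≤ l j := by
      intro j
      simp only [hldef]
      split_ifs
      · exact (hC j).le
      · linarith
      · exact le_refl 0
    have hlC : ∀ j, l j ≤ C j := by
      intro j
      simp only [hldef]
      split_ifs with h1 h2
      · exact le_refl _
      · have hj : j = a k := by rw [← h2]; simp
        rw [hj]; exact htC
      · exact (hC j).le
    have hCjW : ∀ j, l j = 0 ∨ C j ≤ W := by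
      intro j
      simp only [hldef]
      split_ifs with h1 h2
      · right
        have := hCS _ h1
        simp only [Equiv.apply_symm_apply] at this
        linarith
      · right
        have hj : j = a k := by rw [← h2]; simp
        rw [hj]; exact hWk
      · left; rfl
    have hlWle : ∀ j, l j ≤ W := by
      intro j
      rcases hCjW j with h | h
      · rw [h]; exact hW0.le
      · exact (hlC j).trans h
    have hlsum : ∑ j, l j = W := by
      have h1 : ∑ j, l j = ∑ j, l (a j) := (Equiv.sum_comp a l).symm
      rw [h1, Finset.sum_congr rfl fun j _ => by
        rw [hla j, show (if j < k then C (a j) else if j = k then W - S else 0)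
          = (1 : ℝ) * (if j < k then C (a j) else if j = k then W - S else 0) by ring]]
      rw [gsum k (fun j => C (a j)) (W - S) (fun _ => (1 : ℝ))]
      simp [← hSdef]
    have hterm : ∀ j, f j * (l j / C j) + c j * l j = r j * l j := by
      intro j; rw [hr]; ring
    refine ⟨fun _ j => l j / W, fun j => l j / C j, l, ?_, ?_, ?_, ?_, hl0, ?_, ?_, ?_, ?_, ?_⟩
    · exact fun i j => div_nonneg (hl0 j) hW0.le
    · exact fun i j => (div_le_one hW0).2 (hlWle j)
    · exact fun j => div_nonneg (hl0 j) (hC j).le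
    · exact fun j => (div_le_one (hC j)).2 (hlC j)
    · intro i
      rw [← Finset.sum_div, hlsum, div_self hW0.ne']
    · intro j
      rw [← Finset.sum_mul, ← hW, mul_comm, div_mul_cancel₀ _ hW0.ne']
    · intro j
      have h2 : C j * (l j / C j) = l j := by field_simp [(hC j).ne']
      rw [h2]
    · intro i j
      show l j / W ≤ l j / C j
      rcases hCjW j with h | h
      · rw [h]; simp
      · exact div_le_div_of_nonneg_left (hl0 j) (hC j) h
    · calc (∑ j ∈ univ.filter (fun j => j < k), C (a j) * r (a j)) + (W - S) * r (a k)
          = (∑ j ∈ univ.filter (fun j => j < k), r (a j) * C (a j)) + r (a k) * (W - S) :=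
            htarget
        _ = ∑ j, r (a j) * (if j < k then C (a j) else if j = k then W - S else 0) :=
            (gsum k (fun j => C (a j)) (W - S) (fun j => r (a j))).symm
        _ = ∑ j, r (a j) * l (a j) :=
            Finset.sum_congr rfl fun j _ => by rw [hla j]
        _ = ∑ j, r j * l j := Equiv.sum_comp a (fun j => r j * l j)
        _ = ∑ j, (f j * (l j / C j) + c j * l j) :=
            Finset.sum_congr rfl fun j _ => (hterm j).symm
  · -- lower bound
    rintro z ⟨x, y, l, hx0, hx1, hy0, hy1, hl0, hrow, hcol, hlCy, hxy, hzeq⟩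
    have hlC : ∀ j, l j ≤ C j := fun j =>
      (hlCy j).trans (mul_le_of_le_one_right (hC j).le (hy1 j))
    have hlsum : ∑ j, l j = W := by
      calc ∑ j, l j = ∑ j, ∑ i, w i * x i j :=
            Finset.sum_congr rfl fun j _ => (hcol j).symm
        _ = ∑ i, ∑ j, w i * x i j := Finset.sum_comm
        _ = ∑ i, w i * ∑ j, x i j :=
            Finset.sum_congr rfl fun i _ => (Finset.mul_sum _ _ _).symm
        _ = ∑ i, w i := Finset.sum_congr rfl fun i _ => by rw [hrow i, mul_one]
        _ = W := hW.symm
    have hrl : ∑ j, r j * l j ≤ z := by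
      rw [hzeq]
      apply Finset.sum_le_sum
      intro j _
      have h1 : f j / C j * l j ≤ f j / C j * (C j * y j) :=
        mul_le_mul_of_nonneg_left (hlCy j) (div_nonneg (hf j) (hC j).le)
      have h2 : f j / C j * (C j * y j) = f j * y j := by
        rw [div_mul_eq_mul_div, mul_comm (C j) (y j), ← mul_assoc,
          mul_div_cancel_right₀ _ (hC j).ne']
      calc r j * l j = f j / C j * l j + c j * l j := by rw [hr]; ring
        _ ≤ f j * y j + c j * l j := by
            have := h1.trans_eq h2
            linarith
    have hknap := knap k (fun j => r (a j)) (fun j => C (a j)) (fun j => l (a j)) (W - S) W ha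
      (fun j => hl0 (a j)) (fun j => hlC (a j)) (by rw [Equiv.sum_comp a l]; exact hlsum)
      (by rw [← hSdef]; ring)
    rw [htarget]
    calc (∑ j ∈ univ.filter (fun j => j < k), r (a j) * C (a j)) + r (a k) * (W - S)
        ≤ ∑ j, r (a j) * l (a j) := hknap
      _ = ∑ j, r j * l j := Equiv.sum_comp a (fun j => r j * l j)
      _ ≤ z := hrl
end

section
/- Every feasible solution of the LP relaxation of the cutting-stock (pattern-based) formulation of BPUC maps to a feasible solution of the LP relaxation of the arc-flow formulation with the same objective value; hence the optimal value z3* of the arc-flow LP relaxation satisfies z3* ≤ z2*, where z2* is the optimal value of the cutting-stock LP relaxation. -/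
open Finset

/-- Size (total item length) of a pattern `g`, where `g d` is the number of items of
size `wsz d` in the pattern (bounded by the demand `q d`). -/
def patSize {n' : ℕ} (wsz q : Fin n' → ℕ) (g : ∀ d : Fin n', Fin (q d + 1)) : ℕ :=
  ∑ d, (g d : ℕ) * wsz d

/-- Feasibility of a fractional solution `p` of the LP relaxation of the cutting-stock
(pattern-based) formulation of BPUC. -/
def CSfeas {n' m : ℕ} (wsz q : Fin n' → ℕ) (C : Fin m → ℕ)
    (p : Fin m → (∀ d : Fin n', Fin (q d + 1)) → ℝ) : Prop :=
  (∀ j g, 0 ≤ p j g) ∧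
  (∀ j g, ¬ patSize wsz q g ≤ C j → p j g = 0) ∧
  (∀ d, ∑ j, ∑ g, ((g d : ℕ) : ℝ) * p j g = (q d : ℝ)) ∧
  (∀ j, ∑ g, p j g = 1)

/-- Objective of the cutting-stock LP: the cost of a nonempty pattern of total size `s`
for bin `j` is `f j + c j * s`; the empty pattern costs 0. -/
noncomputable def CSobj {n' m : ℕ} (wsz q : Fin n' → ℕ) (f c : Fin m → ℝ)
    (p : Fin m → (∀ d : Fin n', Fin (q d + 1)) → ℝ) : ℝ :=
  ∑ j, ∑ g,
    (if patSize wsz q g = 0 then 0 else f j + c j * (patSize wsz q g : ℝ)) * p j g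

/-- Feasibility of a fractional solution `(x, y)` of the LP relaxation of the arc-flow
formulation: `x kk d` is the flow on the item arc `(kk, kk + wsz d)`, `y j a` the flow on
the bin arc `(a, F)` of bin `j`. -/
def AFfeas {n' m : ℕ} (wsz q : Fin n' → ℕ) (C : Fin m → ℕ) (Cmax : ℕ)
    (x : ℕ → Fin n' → ℝ) (y : Fin m → ℕ → ℝ) : Prop :=
  (∀ kk d, 0 ≤ x kk d) ∧
  (∀ j a, 0 ≤ y j a) ∧
  (∀ kk d, ¬ kk + wsz d ≤ Cmax → x kk d = 0) ∧
  (∀ j a, ¬ a ≤ C j → y j a = 0) ∧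
  -- flow conservation at internal nodes b = 1, …, Cmax
  (∀ b, 1 ≤ b → b ≤ Cmax →
    (∑ d, if wsz d ≤ b then x (b - wsz d) d else 0)
      - (∑ d, x b d) - (∑ j, y j b) = 0) ∧
  -- flow conservation at node 0
  (0 - (∑ d, x 0 d) - (∑ j, y j 0) = -(m : ℝ)) ∧
  -- one bin arc per bin
  (∀ j, ∑ a ∈ Finset.range (Cmax + 1), y j a = 1) ∧
  -- number of arcs of each size equals the number of items of that size
  (∀ d, ∑ kk ∈ Finset.range (Cmax + 1), x kk d = (q d : ℝ))

/-- Objective of the arc-flow LP: the bin arc `(a, F)` of bin `j` costs `f j + a * c j`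
when `a > 0`, and 0 when `a = 0`. -/
noncomputable def AFobj {m : ℕ} (f c : Fin m → ℝ) (Cmax : ℕ)
    (y : Fin m → ℕ → ℝ) : ℝ :=
  ∑ j, ∑ a ∈ Finset.range (Cmax + 1),
    (if a = 0 then 0 else f j + (a : ℝ) * c j) * y j a

section Aux
variable {n' : ℕ} (wsz q : Fin n' → ℕ)

/-- prefix size: total size of items of type `< k` in pattern `g`. -/
def preSz (g : ∀ d : Fin n', Fin (q d + 1)) (k : ℕ) : ℕ :=
  ∑ d : Fin n', if (d : ℕ) < k then (g d : ℕ) * wsz d else 0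

lemma preSz_zero (g) : preSz wsz q g 0 = 0 := by simp [preSz]

lemma preSz_last (g) : preSz wsz q g n' = patSize wsz q g := by
  unfold preSz patSize
  exact Finset.sum_congr rfl fun d _ => if_pos d.isLt

lemma preSz_mono (g) {k l : ℕ} (h : k ≤ l) : preSz wsz q g k ≤ preSz wsz q g l := by
  refine Finset.sum_le_sum fun d _ => ?_
  by_cases h1 : (d : ℕ) < k
  · rw [if_pos h1, if_pos (lt_of_lt_of_le h1 h)]
  · rw [if_neg h1]; exact Nat.zero_le _

lemma preSz_succ (g) (d : Fin n') :
    preSz wsz q g ((d : ℕ) + 1) = preSz wsz q g d + (g d : ℕ) * wsz d := by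
  have h : ∀ d' : Fin n', (if (d' : ℕ) < (d : ℕ) + 1 then (g d' : ℕ) * wsz d' else 0)
      = (if (d' : ℕ) < (d : ℕ) then (g d' : ℕ) * wsz d' else 0)
        + (if d' = d then (g d' : ℕ) * wsz d' else 0) := by
    intro d'
    rcases lt_trichotomy (d' : ℕ) (d : ℕ) with h1 | h1 | h1
    · rw [if_pos (by omega), if_pos h1, if_neg (by simp [Fin.ext_iff]; omega), add_zero]
    · rw [if_pos (by omega), if_neg (by omega), if_pos (Fin.ext h1), zero_add]
    · rw [if_neg (by omega), if_neg (by omega), if_neg (by simp [Fin.ext_iff]; omega), add_zero]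
  unfold preSz
  rw [Finset.sum_congr rfl fun d' _ => h d', Finset.sum_add_distrib,
    Finset.sum_ite_eq' Finset.univ d, if_pos (Finset.mem_univ d)]

lemma pos_le_patSize (g) (d : Fin n') {t : ℕ} (ht : t < (g d : ℕ)) :
    preSz wsz q g d + (t + 1) * wsz d ≤ patSize wsz q g := by
  have h1 : (t + 1) * wsz d ≤ (g d : ℕ) * wsz d := Nat.mul_le_mul_right _ ht
  have h2 := preSz_succ wsz q g d
  have h3 := preSz_mono wsz q g (show (d : ℕ) + 1 ≤ n' from d.isLt)
  rw [preSz_last] at h3; omega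

/-- number of items of type `d` starting at node `kk` in the path of pattern `g`. -/
noncomputable def Sc (g : ∀ d : Fin n', Fin (q d + 1)) (d : Fin n') (kk : ℕ) : ℝ :=
  ∑ t ∈ Finset.range (g d : ℕ), if preSz wsz q g d + t * wsz d = kk then (1:ℝ) else 0

/-- number of items of type `d` ending at node `b`. -/
noncomputable def Ec (g : ∀ d : Fin n', Fin (q d + 1)) (d : Fin n') (b : ℕ) : ℝ :=
  ∑ t ∈ Finset.range (g d : ℕ), if preSz wsz q g d + (t + 1) * wsz d = b then (1:ℝ) else 0

lemma Sc_nonneg (g d kk) : 0 ≤ Sc wsz q g d kk :=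
  Finset.sum_nonneg fun t _ => by positivity

lemma balance (g) (b : ℕ) :
    (∑ d, Ec wsz q g d b) - (∑ d, Sc wsz q g d b)
      = (if patSize wsz q g = b then (1:ℝ) else 0) - (if 0 = b then (1:ℝ) else 0) := by
  rw [← Finset.sum_sub_distrib]
  have h1 : ∀ d : Fin n', Ec wsz q g d b - Sc wsz q g d b
      = (if preSz wsz q g ((d : ℕ) + 1) = b then (1:ℝ) else 0)
        - (if preSz wsz q g (d : ℕ) = b then (1:ℝ) else 0) := by
    intro d
    have h2 := Finset.sum_range_sub
      (f := fun t => if preSz wsz q g d + t * wsz d = b then (1:ℝ) else 0) ((g d : ℕ))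
    simp only [Finset.sum_sub_distrib] at h2
    unfold Ec Sc
    rw [h2, preSz_succ]
    norm_num
  rw [Finset.sum_congr rfl fun d _ => h1 d,
    Fin.sum_univ_eq_sum_range (fun k => (if preSz wsz q g (k + 1) = b then (1:ℝ) else 0)
      - (if preSz wsz q g k = b then (1:ℝ) else 0)) n',
    Finset.sum_range_sub (fun k => if preSz wsz q g k = b then (1:ℝ) else 0) n',
    preSz_last, preSz_zero]

end Aux

lemma exists_AF {n' m : ℕ} (wsz q : Fin n' → ℕ) (hwsz : ∀ d, 0 < wsz d)
    (C : Fin m → ℕ) (f c : Fin m → ℝ) (Cmax : ℕ) (hCmax : ∀ j, C j ≤ Cmax)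
    (p : Fin m → (∀ d : Fin n', Fin (q d + 1)) → ℝ) (hp : CSfeas wsz q C p) :
    ∃ x y, AFfeas wsz q C Cmax x y ∧ AFobj f c Cmax y = CSobj wsz q f c p := by
  obtain ⟨hp0, hpC, hpq, hp1⟩ := hp
  -- if p j g ≠ 0 then the pattern fits in bin j hence in Cmax
  have hfit : ∀ j g, p j g ≠ 0 → patSize wsz q g ≤ Cmax := by
    intro j g h
    refine le_trans ?_ (hCmax j)
    by_contra hh
    exact h (hpC j g hh)
  refine ⟨fun kk d => ∑ j, ∑ g, p j g * Sc wsz q g d kk,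
    fun j a => ∑ g, p j g * (if patSize wsz q g = a then (1:ℝ) else 0), ?_, ?_⟩
  · -- rearrangement lemmas
    have hB : ∀ b : ℕ, (∑ d, ∑ j, ∑ g, p j g * Sc wsz q g d b)
        = ∑ j, ∑ g, p j g * (∑ d, Sc wsz q g d b) := by
      intro b
      rw [Finset.sum_comm]
      refine Finset.sum_congr rfl fun j _ => ?_
      rw [Finset.sum_comm]
      exact Finset.sum_congr rfl fun g _ => (Finset.mul_sum _ _ _).symm
    refine ⟨?_, ?_, ?_, ?_, ?_, ?_, ?_, ?_⟩
    · intro kk d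
      refine Finset.sum_nonneg fun j _ => Finset.sum_nonneg fun g _ => ?_
      exact mul_nonneg (hp0 j g) (Sc_nonneg wsz q g d kk)
    · intro j a
      refine Finset.sum_nonneg fun g _ => mul_nonneg (hp0 j g) ?_
      positivity
    · -- x kk d = 0 when kk + wsz d > Cmax
      intro kk d hkk
      refine Finset.sum_eq_zero fun j _ => Finset.sum_eq_zero fun g _ => ?_
      by_cases hpz : p j g = 0
      · rw [hpz, zero_mul]
      · have h1 : Sc wsz q g d kk = 0 := by
          refine Finset.sum_eq_zero fun t ht => ?_
          rw [Finset.mem_range] at ht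
          rw [if_neg]
          intro he
          have h2 := pos_le_patSize wsz q g d ht
          have h3 := hfit j g hpz
          have h4 : (t + 1) * wsz d = t * wsz d + wsz d := by ring
          omega
        rw [h1, mul_zero]
    · -- y j a = 0 when a > C j
      intro j a ha
      refine Finset.sum_eq_zero fun g _ => ?_
      by_cases hg : patSize wsz q g = a
      · rw [hpC j g (by omega), zero_mul]
      · rw [if_neg hg, mul_zero]
    · -- flow conservation at internal nodes
      intro b hb1 hb2
      have hA : ∀ d : Fin n',
          (if wsz d ≤ b then ∑ j, ∑ g, p j g * Sc wsz q g d (b - wsz d) else 0)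
            = ∑ j, ∑ g, p j g * Ec wsz q g d b := by
        intro d
        by_cases hw : wsz d ≤ b
        · rw [if_pos hw]
          refine Finset.sum_congr rfl fun j _ => Finset.sum_congr rfl fun g _ => ?_
          congr 1
          refine Finset.sum_congr rfl fun t _ => ?_
          have h4 : (t + 1) * wsz d = t * wsz d + wsz d := by ring
          congr 1
          simp only [eq_iff_iff]
          omega
        · rw [if_neg hw]
          symm
          refine Finset.sum_eq_zero fun j _ => Finset.sum_eq_zero fun g _ => ?_
          have h1 : Ec wsz q g d b = 0 := by
            refine Finset.sum_eq_zero fun t ht => ?_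
            rw [if_neg]
            have h2 : wsz d ≤ (t + 1) * wsz d := Nat.le_mul_of_pos_left _ (Nat.succ_pos t)
            omega
          rw [h1, mul_zero]
      have hA' : ∀ b' : ℕ, (∑ d, ∑ j, ∑ g, p j g * Ec wsz q g d b')
          = ∑ j, ∑ g, p j g * (∑ d, Ec wsz q g d b') := by
        intro b'
        rw [Finset.sum_comm]
        refine Finset.sum_congr rfl fun j _ => ?_
        rw [Finset.sum_comm]
        exact Finset.sum_congr rfl fun g _ => (Finset.mul_sum _ _ _).symm
      rw [Finset.sum_congr rfl fun d _ => hA d, hA' b, hB b]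
      rw [← Finset.sum_sub_distrib, ← Finset.sum_sub_distrib]
      refine Finset.sum_eq_zero fun j _ => ?_
      rw [← Finset.sum_sub_distrib, ← Finset.sum_sub_distrib]
      refine Finset.sum_eq_zero fun g _ => ?_
      have hbal := balance wsz q g b
      rw [if_neg (by omega : ¬ (0 = b)), sub_zero] at hbal
      rw [← mul_sub, hbal]
      ring
    · -- flow conservation at node 0
      rw [hB 0]
      have h1 : ∀ j : Fin m, ∀ g, p j g * (∑ d, Sc wsz q g d 0)
            + p j g * (if patSize wsz q g = 0 then (1:ℝ) else 0) = p j g := by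
        intro j g
        have hbal := balance wsz q g 0
        have hE : (∑ d, Ec wsz q g d 0) = 0 := by
          refine Finset.sum_eq_zero fun d _ => Finset.sum_eq_zero fun t ht => ?_
          rw [if_neg]
          have h2 : wsz d ≤ (t + 1) * wsz d := Nat.le_mul_of_pos_left _ (Nat.succ_pos t)
          have h3 := hwsz d
          omega
        rw [hE, if_pos rfl, zero_sub] at hbal
        have h4 : (∑ d, Sc wsz q g d 0) = 1 - (if patSize wsz q g = 0 then (1:ℝ) else 0) := by
          linarith
        rw [h4]; ring
      have h2 : (∑ j, ∑ g, p j g * (∑ d, Sc wsz q g d 0))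
          + (∑ j, ∑ g, p j g * (if patSize wsz q g = 0 then (1:ℝ) else 0)) = (m : ℝ) := by
        rw [← Finset.sum_add_distrib]
        have : ∀ j : Fin m, (∑ g, p j g * (∑ d, Sc wsz q g d 0))
            + (∑ g, p j g * (if patSize wsz q g = 0 then (1:ℝ) else 0)) = 1 := by
          intro j
          rw [← Finset.sum_add_distrib, Finset.sum_congr rfl fun g _ => h1 j g, hp1 j]
        rw [Finset.sum_congr rfl fun j _ => this j]
        simp
      linarith
    · -- one bin arc per bin
      intro j
      rw [Finset.sum_comm]
      have h1 : ∀ g, (∑ a ∈ Finset.range (Cmax + 1),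
          p j g * (if patSize wsz q g = a then (1:ℝ) else 0)) = p j g := by
        intro g
        by_cases hpz : p j g = 0
        · rw [hpz]; simp
        · rw [← Finset.mul_sum, Finset.sum_ite_eq,
            if_pos (Finset.mem_range.mpr (by have := hfit j g hpz; omega)), mul_one]
      rw [Finset.sum_congr rfl fun g _ => h1 g, hp1 j]
    · -- arc counts
      intro d
      have h0 : (∑ kk ∈ Finset.range (Cmax + 1), ∑ j, ∑ g, p j g * Sc wsz q g d kk)
          = ∑ j, ∑ g, p j g * (∑ kk ∈ Finset.range (Cmax + 1), Sc wsz q g d kk) := by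
        rw [Finset.sum_comm]
        refine Finset.sum_congr rfl fun j _ => ?_
        rw [Finset.sum_comm]
        exact Finset.sum_congr rfl fun g _ => (Finset.mul_sum _ _ _).symm
      rw [h0, ← hpq d]
      refine Finset.sum_congr rfl fun j _ => Finset.sum_congr rfl fun g _ => ?_
      by_cases hpz : p j g = 0
      · rw [hpz]; ring
      · have h1 : (∑ kk ∈ Finset.range (Cmax + 1), Sc wsz q g d kk) = ((g d : ℕ) : ℝ) := by
          unfold Sc
          rw [Finset.sum_comm]
          have h2 : ∀ t ∈ Finset.range (g d : ℕ), (∑ kk ∈ Finset.range (Cmax + 1),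
              if preSz wsz q g d + t * wsz d = kk then (1:ℝ) else 0) = 1 := by
            intro t ht
            rw [Finset.mem_range] at ht
            rw [Finset.sum_ite_eq, if_pos]
            rw [Finset.mem_range]
            have h3 := pos_le_patSize wsz q g d ht
            have h4 := hfit j g hpz
            have h5 : t * wsz d ≤ (t + 1) * wsz d := by
              have : (t + 1) * wsz d = t * wsz d + wsz d := by ring
              omega
            omega
          rw [Finset.sum_congr rfl h2]
          simp
        rw [h1]; ring
  · -- objective values agree
    unfold AFobj CSobj
    refine Finset.sum_congr rfl fun j _ => ?_
    simp only [Finset.mul_sum]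
    rw [Finset.sum_comm]
    refine Finset.sum_congr rfl fun g _ => ?_
    by_cases hpz : p j g = 0
    · rw [hpz]; simp
    · have h1 : ∀ a : ℕ, (if a = 0 then (0:ℝ) else f j + (a : ℝ) * c j)
          * (p j g * (if patSize wsz q g = a then (1:ℝ) else 0))
          = if patSize wsz q g = a then
              (if a = 0 then (0:ℝ) else f j + (a : ℝ) * c j) * p j g else 0 := by
        intro a
        by_cases h : patSize wsz q g = a
        · rw [if_pos h, if_pos h, mul_one]
        · rw [if_neg h, if_neg h, mul_zero, mul_zero]
      rw [Finset.sum_congr rfl fun a _ => h1 a, Finset.sum_ite_eq,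
        if_pos (Finset.mem_range.mpr (by have := hfit j g hpz; omega))]
      ring_nf

/-- every feasible solution of the cutting-stock LP relaxation maps to a
feasible solution of the arc-flow LP relaxation with the same objective value; hence the
optimal value of the arc-flow LP is at most that of the cutting-stock LP. -/
theorem stmt7 (n' m : ℕ) (wsz q : Fin n' → ℕ) (hwsz : ∀ d, 0 < wsz d)
    (C : Fin m → ℕ) (hC : ∀ j, 0 < C j) (f c : Fin m → ℝ)
    (hf : ∀ j, 0 ≤ f j) (hc : ∀ j, 0 ≤ c j)
    (Cmax : ℕ) (hCmax : ∀ j, C j ≤ Cmax) :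
    (∀ p, CSfeas wsz q C p →
        ∃ x y, AFfeas wsz q C Cmax x y ∧ AFobj f c Cmax y = CSobj wsz q f c p) ∧
    (∀ hne : {z : ℝ | ∃ p, CSfeas wsz q C p ∧ z = CSobj wsz q f c p}.Nonempty,
      ∀ hbdd : BddBelow {z : ℝ | ∃ x y, AFfeas wsz q C Cmax x y ∧ z = AFobj f c Cmax y},
      sInf {z : ℝ | ∃ x y, AFfeas wsz q C Cmax x y ∧ z = AFobj f c Cmax y}
        ≤ sInf {z : ℝ | ∃ p, CSfeas wsz q C p ∧ z = CSobj wsz q f c p}) := by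
  refine ⟨fun p hp => exists_AF wsz q hwsz C f c Cmax hCmax p hp, fun hne hbdd => ?_⟩
  refine csInf_le_csInf hbdd hne ?_
  rintro z ⟨p, hp, hz⟩
  obtain ⟨x, y, hxy, hobj⟩ := exists_AF wsz q hwsz C f c Cmax hCmax p hp
  exact ⟨x, y, hxy, by rw [hz, hobj]⟩
end

section
/- For the BPUC instance with sizes S = {1,1,2} (so q_1 = 2 items of size 1 and q_2 = 1 item of size 2) and bins B = {(3,1,1),(3,4,4)}, the optimal value of the cutting-stock LP relaxation is z2* = 10, strictly greater than the optimal value of the arc-flow LP relaxation z3* = 28/3 ≈ 9.33. Hence the cutting-stock LP bound can be strictly stronger than the arc-flow LP bound. -/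
/-
Both optimal values are certified by a feasible solution together with a dual solution of the
same value (weak LP duality). In the cutting-stock LP the first bin packs one item of each size
and the second bin packs the two size-1 items with weight 1/2; the prices u = (-9, 0) for the
bins and v = (6, 7) for the item types bound every feasible solution below by 10. The arc-flow
LP is cheaper because it may route flow 1/3 along the path 0 → 1 → 2 → 3 of three size-1 arcs,
which as a pattern would pack three items of size 1 while only two exist; node potentials
π(a) = -16a/3, item prices v = (16/3, 32/3) and bin prices u = (-12, 0) show that its value
28/3 is optimal.
-/

open Finset

/-- Instance of Proposition 4: item sizes 1,1,2 (so `w' = (1,2)`, `q = (2,1)`) and bins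
`(C,f,c) = (3,1,1)` and `(3,4,4)`. -/
def wsz8 : Fin 2 → ℕ := ![1, 2]
def q8 : Fin 2 → ℕ := ![2, 1]
def C8 : Fin 2 → ℕ := ![3, 3]
noncomputable def f8 : Fin 2 → ℝ := ![1, 4]
noncomputable def c8 : Fin 2 → ℝ := ![1, 4]

theorem Finset.sum_range_ite_le_sub {M : Type*} [AddCommMonoid M] (N w : ℕ) (F : ℕ → M)
    (hF : ∀ k, N ≤ k + w → F k = 0) :
    ∑ a ∈ range N, (if w ≤ a then F (a - w) else 0) = ∑ k ∈ range N, F k := by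
  rcases le_or_gt w N with hwN | hNw
  · obtain ⟨r, rfl⟩ := Nat.exists_eq_add_of_le hwN
    rw [sum_range_add, add_comm w r, sum_range_add]
    simp only [Nat.le_add_right, if_true, Nat.add_sub_cancel_left]
    rw [sum_eq_zero fun a ha => if_neg (by simpa using ha),
      sum_eq_zero fun k _ => hF (r + k) (by omega)]
    simp
  · refine (sum_eq_zero fun a ha => if_neg ?_).trans (sum_eq_zero fun k hk => hF k ?_).symm <;>
      simp only [mem_range] at * <;> omega

theorem le_CSobj_of_dual {n' m : ℕ} {wsz q : Fin n' → ℕ} {C : Fin m → ℕ} {f c : Fin m → ℝ}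
    {p : Fin m → (∀ d : Fin n', Fin (q d + 1)) → ℝ} (hp : CSfeas wsz q C p)
    (u : Fin m → ℝ) (v : Fin n' → ℝ)
    (hdual : ∀ j g, patSize wsz q g ≤ C j → u j + ∑ d, v d * (g d : ℕ) ≤
      if patSize wsz q g = 0 then 0 else f j + c j * (patSize wsz q g : ℝ)) :
    ∑ j, u j + ∑ d, v d * q d ≤ CSobj wsz q f c p := by
  obtain ⟨hnonneg, hinfeasible, hdemand, hbin⟩ := hp
  calc ∑ j, u j + ∑ d, v d * q d
      = ∑ j, ∑ g, (u j + ∑ d, v d * (g d : ℕ)) * p j g := by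
        simp only [add_mul, sum_add_distrib, ← mul_sum, hbin, mul_one, ← hdemand, sum_mul,
          mul_assoc]
        congr 1
        simp only [mul_sum]
        rw [sum_comm]
        exact sum_congr rfl fun j _ => sum_comm
    _ ≤ CSobj wsz q f c p := by
        refine sum_le_sum fun j _ => sum_le_sum fun g _ => ?_
        by_cases hg : patSize wsz q g ≤ C j
        · exact mul_le_mul_of_nonneg_right (hdual j g hg) (hnonneg j g)
        · simp [hinfeasible j g hg]

theorem le_AFobj_of_dual {n' m : ℕ} {wsz q : Fin n' → ℕ} {C : Fin m → ℕ} {Cmax : ℕ}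
    {f c : Fin m → ℝ} {x : ℕ → Fin n' → ℝ} {y : Fin m → ℕ → ℝ}
    (h : AFfeas wsz q C Cmax x y) (hw : ∀ d, 1 ≤ wsz d)
    (π : ℕ → ℝ) (u : Fin m → ℝ) (v : Fin n' → ℝ)
    (harc : ∀ k d, k + wsz d ≤ Cmax → π (k + wsz d) - π k + v d ≤ 0)
    (hloss : ∀ j a, a ≤ C j → a ≤ Cmax → u j - π a ≤ if a = 0 then 0 else f j + a * c j) :
    ∑ j, u j + ∑ d, v d * q d - m * π 0 ≤ AFobj f c Cmax y := by
  obtain ⟨hx, hy, hxout, hyout, hflow, hsource, hybin, hdemand⟩ := h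
  set R := range (Cmax + 1)
  have hnet : ∀ a ∈ R, ∑ j, y j a = (if a = 0 then (m : ℝ) else 0) +
      ∑ d, ((if wsz d ≤ a then x (a - wsz d) d else 0) - x a d) := by
    intro a ha
    rw [sum_sub_distrib]
    rcases Nat.eq_zero_or_pos a with rfl | hpos
    · simp only [fun d => Nat.not_le.2 (hw d), if_true, if_false, sum_const_zero]
      linarith
    · simp only [hpos.ne', if_false]
      linarith [hflow a hpos (Nat.lt_succ_iff.1 (mem_range.1 ha))]
  have hinflow : ∀ d, ∑ a ∈ R, π a * (if wsz d ≤ a then x (a - wsz d) d else 0) =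
      ∑ k ∈ R, π (k + wsz d) * x k d := by
    intro d
    refine (sum_congr rfl fun a _ => ?_).trans (sum_range_ite_le_sub _ (wsz d)
      (fun k => π (k + wsz d) * x k d) fun k hk => by rw [hxout k d (by omega), mul_zero])
    split_ifs with ha
    · rw [Nat.sub_add_cancel ha]
    · exact mul_zero _
  have hpotential : ∑ a ∈ R, π a * ∑ j, y j a ≤ m * π 0 - ∑ d, v d * q d :=
    calc ∑ a ∈ R, π a * ∑ j, y j a
        = m * π 0 + ∑ d, ∑ k ∈ R, (π (k + wsz d) - π k) * x k d := by
          rw [sum_congr rfl fun a ha => by rw [hnet a ha]]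
          simp only [mul_add, mul_sum, mul_sub, sum_add_distrib, sum_sub_distrib, sub_mul]
          congr 1
          · simp [R, mul_comm]
          · rw [sum_comm (s := R), sum_comm (s := R), sum_congr rfl fun d _ => hinflow d]
      _ ≤ m * π 0 + ∑ d, ∑ k ∈ R, (-v d) * x k d := by
          gcongr m * π 0 + ∑ d, ∑ k ∈ R, ?_ with d _ k
          by_cases hk : k + wsz d ≤ Cmax
          · exact mul_le_mul_of_nonneg_right (by linarith [harc k d hk]) (hx k d)
          · simp [hxout k d hk]
      _ = m * π 0 - ∑ d, v d * q d := by
          simp only [neg_mul, sum_neg_distrib, ← mul_sum, hdemand, sub_eq_add_neg]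
  calc ∑ j, u j + ∑ d, v d * q d - m * π 0
      ≤ ∑ j, u j - ∑ a ∈ R, π a * ∑ j, y j a := by linarith
    _ = ∑ j, ∑ a ∈ R, (u j - π a) * y j a := by
        simp only [sub_mul, sum_sub_distrib, ← mul_sum, hybin, mul_one]
        congr 1
        rw [sum_comm]
        simp only [mul_sum]
    _ ≤ AFobj f c Cmax y := by
        refine sum_le_sum fun j _ => sum_le_sum fun a ha => ?_
        by_cases haj : a ≤ C j
        · exact mul_le_mul_of_nonneg_right
            (hloss j a haj (Nat.lt_succ_iff.1 (mem_range.1 ha))) (hy j a)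
        · simp [hyout j a haj]

def pat8 (a : Fin 3) (b : Fin 2) : ∀ d : Fin 2, Fin (q8 d + 1) :=
  Fin.cons a (Fin.cons b finZeroElim)

@[simp] theorem pat8_zero (a : Fin 3) (b : Fin 2) : pat8 a b 0 = a := rfl

@[simp] theorem pat8_one (a : Fin 3) (b : Fin 2) : pat8 a b 1 = b := rfl

theorem patSize_wsz8 (g : ∀ d : Fin 2, Fin (q8 d + 1)) :
    patSize wsz8 q8 g = (g 0 : ℕ) + 2 * (g 1 : ℕ) := by
  simp [patSize, Fin.sum_univ_two, wsz8, mul_comm]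

noncomputable def p8 : Fin 2 → (∀ d : Fin 2, Fin (q8 d + 1)) → ℝ :=
  ![fun g => if g = pat8 1 1 then 1 else 0,
    fun g => (if g = pat8 2 0 then 1 / 2 else 0) + (if g = pat8 0 0 then 1 / 2 else 0)]

theorem CSfeas_p8 : CSfeas wsz8 q8 C8 p8 := by
  refine ⟨fun j g => ?_, fun j g hg => ?_, Fin.forall_fin_two.2 ⟨?_, ?_⟩,
    Fin.forall_fin_two.2 ⟨?_, ?_⟩⟩
  · fin_cases j <;> simp only [p8, Fin.zero_eta, Fin.mk_one, Matrix.cons_val_zero,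
      Matrix.cons_val_one] <;> positivity
  · have hC : C8 j = 3 := by fin_cases j <;> rfl
    rw [patSize_wsz8, hC] at hg
    fin_cases j <;> simp only [p8, Fin.zero_eta, Fin.mk_one, Matrix.cons_val_zero,
      Matrix.cons_val_one] <;> split_ifs <;> simp_all
  all_goals
    simp only [p8, Matrix.cons_val_zero, Matrix.cons_val_one, Fin.sum_univ_two, mul_add, mul_ite,
      mul_zero, sum_add_distrib, sum_ite_eq', mem_univ, if_true] <;> norm_num [q8]

theorem CSobj_p8 : CSobj wsz8 q8 f8 c8 p8 = 10 := by
  simp only [CSobj, p8, Matrix.cons_val_zero, Matrix.cons_val_one, Fin.sum_univ_two, mul_add,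
    mul_ite, mul_zero, sum_add_distrib, sum_ite_eq', mem_univ, if_true, patSize_wsz8]
  norm_num [f8, c8]

theorem ten_le_CSobj {p : Fin 2 → (∀ d : Fin 2, Fin (q8 d + 1)) → ℝ}
    (hp : CSfeas wsz8 q8 C8 p) : 10 ≤ CSobj wsz8 q8 f8 c8 p := by
  refine le_of_eq_of_le ?_ (le_CSobj_of_dual hp ![-9, 0] ![6, 7] fun j g hg => ?_)
  · norm_num [Fin.sum_univ_two, q8]
  rw [patSize_wsz8] at hg ⊢
  have ha : (g 0 : ℕ) ≤ 2 := Nat.lt_succ_iff.1 (g 0).isLt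
  have hb : (g 1 : ℕ) ≤ 1 := Nat.lt_succ_iff.1 (g 1).isLt
  simp only [Fin.sum_univ_two]
  generalize (g 0 : ℕ) = a at *
  generalize (g 1 : ℕ) = b at *
  revert hg
  interval_cases a <;> interval_cases b <;> fin_cases j <;> norm_num [f8, c8, C8]

noncomputable def x8 : ℕ → Fin 2 → ℝ
  | 0 => ![2 / 3, 2 / 3]
  | 1 => ![1 / 3, 1 / 3]
  | 2 => ![1, 0]
  | _ => 0

noncomputable def y8 (j : Fin 2) : ℕ → ℝ
  | 0 => ![0, 2 / 3] j
  | 3 => ![1, 1 / 3] j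
  | _ => 0

theorem AFfeas_x8_y8 : AFfeas wsz8 q8 C8 3 x8 y8 := by
  refine ⟨fun k d => ?_, fun j a => ?_, fun k d hk => ?_, fun j a ha => ?_, fun b hb1 hb3 => ?_,
    ?_, Fin.forall_fin_two.2 ⟨?_, ?_⟩, Fin.forall_fin_two.2 ⟨?_, ?_⟩⟩
  · unfold x8
    split <;> fin_cases d <;> norm_num
  · unfold y8
    split <;> fin_cases j <;> norm_num
  · fin_cases d <;> rcases k with _ | _ | _ | k <;> simp_all [x8, wsz8]
  · fin_cases j <;> rcases a with _ | _ | _ | _ | a <;> simp_all [y8, C8]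
  · interval_cases b <;> norm_num [Fin.sum_univ_two, wsz8, x8, y8]
  all_goals norm_num [Fin.sum_univ_two, sum_range_succ, x8, y8, q8]

theorem AFobj_y8 : AFobj f8 c8 3 y8 = 28 / 3 := by
  norm_num [AFobj, Fin.sum_univ_two, sum_range_succ, y8, f8, c8]

theorem twentyEight_div_three_le_AFobj {x : ℕ → Fin 2 → ℝ} {y : Fin 2 → ℕ → ℝ}
    (h : AFfeas wsz8 q8 C8 3 x y) : 28 / 3 ≤ AFobj f8 c8 3 y := by
  refine le_of_eq_of_le ?_ (le_AFobj_of_dual h (by decide) (fun a => -16 / 3 * a) ![-12, 0]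
    (fun d => 16 / 3 * wsz8 d) (fun k d _ => by push_cast; linarith) fun j a _ ha => ?_)
  · norm_num [Fin.sum_univ_two, wsz8, q8]
  interval_cases a <;> fin_cases j <;> norm_num [f8, c8]

/-- on this instance the cutting-stock LP optimum is `z2* = 10`, the
arc-flow LP optimum is `z3* = 28/3`, and `z2* > z3*`: the cutting-stock bound can be
strictly stronger than the arc-flow bound. -/
theorem stmt8 :
    IsLeast {z : ℝ | ∃ p, CSfeas wsz8 q8 C8 p ∧ z = CSobj wsz8 q8 f8 c8 p} 10 ∧
    IsLeast {z : ℝ | ∃ x y, AFfeas wsz8 q8 C8 3 x y ∧ z = AFobj f8 c8 3 y} (28 / 3) ∧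
    (28 / 3 : ℝ) < 10 := by
  refine ⟨⟨⟨p8, CSfeas_p8, CSobj_p8.symm⟩, ?_⟩,
    ⟨⟨x8, y8, AFfeas_x8_y8, AFobj_y8.symm⟩, ?_⟩, by norm_num⟩
  · rintro z ⟨p, hp, rfl⟩
    exact ten_le_CSobj hp
  · rintro z ⟨x, y, h, rfl⟩
    exact twentyEight_div_three_le_AFobj h
end

section
/- If bins i and j satisfy f_i ≤ f_j, c_i ≤ c_j and C_i ≥ C_j (bin i dominates bin j), then for any feasible BPUC packing using bin j but not satisfying y_j ≤ y_i and l_j ≤ l_i, there exists a feasible packing of cost at most the original in which the contents of bins i and j are swapped appropriately so that y_j ≤ y_i and l_j ≤ l_i hold. Consequently some optimal solution satisfies y_j ≤ y_i and l_j ≤ l_i. -/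
open Finset

/-- Load of bin `j` under the packing `P`. -/
noncomputable def loadOf {n m : ℕ} (w : Fin n → ℝ) (P : Fin n → Fin m) (j : Fin m) : ℝ :=
  ∑ i ∈ univ.filter (fun i => P i = j), w i

/-- A packing is feasible when every bin load is within its capacity. -/
def feasOf {n m : ℕ} (w : Fin n → ℝ) (C : Fin m → ℝ) (P : Fin n → Fin m) : Prop :=
  ∀ j, loadOf w P j ≤ C j

/-- BPUC cost: every used bin (containing at least one item) costs `f_j + c_j l_j`. -/
noncomputable def costOf {n m : ℕ} (w : Fin n → ℝ) (f c : Fin m → ℝ)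
    (P : Fin n → Fin m) : ℝ :=
  ∑ j ∈ univ.filter (fun j => ∃ i, P i = j), (f j + c j * loadOf w P j)

lemma loadOf_nonneg {n m : ℕ} (w : Fin n → ℝ) (hw : ∀ i, 0 < w i) (P : Fin n → Fin m)
    (k : Fin m) : 0 ≤ loadOf w P k :=
  Finset.sum_nonneg fun i _ => (hw i).le

lemma used_iff_load_pos {n m : ℕ} (w : Fin n → ℝ) (hw : ∀ i, 0 < w i) (P : Fin n → Fin m)
    (k : Fin m) : (∃ i, P i = k) ↔ 0 < loadOf w P k := by
  classical
  constructor
  · rintro ⟨i, hi⟩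
    exact Finset.sum_pos (fun i _ => hw i) ⟨i, by simp [hi]⟩
  · intro h
    by_contra hne
    push_neg at hne
    have : loadOf w P k = 0 := by
      unfold loadOf
      apply Finset.sum_eq_zero
      intro i hi
      simp only [mem_filter] at hi
      exact absurd hi.2 (hne i)
    linarith

lemma loadOf_swap {n m : ℕ} (w : Fin n → ℝ) (P : Fin n → Fin m) (i0 j0 k : Fin m) :
    loadOf w (fun i => Equiv.swap i0 j0 (P i)) k = loadOf w P (Equiv.swap i0 j0 k) := by
  classical
  unfold loadOf
  apply Finset.sum_congr _ (fun _ _ => rfl)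
  ext i
  simp [Equiv.swap_apply_eq_iff]

lemma used_swap {n m : ℕ} (P : Fin n → Fin m) (i0 j0 k : Fin m) :
    (∃ i, Equiv.swap i0 j0 (P i) = k) ↔ (∃ i, P i = Equiv.swap i0 j0 k) := by
  simp [Equiv.swap_apply_eq_iff]

lemma costOf_eq_sum_ite {n m : ℕ} (w : Fin n → ℝ) (f c : Fin m → ℝ) (P : Fin n → Fin m) :
    costOf w f c P =
      ∑ k : Fin m, if (∃ i, P i = k) then f k + c k * loadOf w P k else 0 := by
  classical
  unfold costOf
  rw [Finset.sum_filter]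

/-- if bin `i0` dominates bin `j0` (`f i0 ≤ f j0`, `c i0 ≤ c j0`,
`C i0 ≥ C j0`), then any feasible packing can be turned into a feasible packing of no
larger cost in which bin `j0` is used only if bin `i0` is, and `l_{j0} ≤ l_{i0}`;
consequently, if a feasible packing exists, some optimal packing satisfies these
dominance conditions. -/
theorem stmt10 (n m : ℕ) (w : Fin n → ℝ) (hw : ∀ i, 0 < w i)
    (C f c : Fin m → ℝ) (hC : ∀ j, 0 < C j) (hf : ∀ j, 0 ≤ f j) (hc : ∀ j, 0 ≤ c j)
    (i0 j0 : Fin m) (hij : i0 ≠ j0)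
    (hfd : f i0 ≤ f j0) (hcd : c i0 ≤ c j0) (hCd : C j0 ≤ C i0) :
    (∀ P : Fin n → Fin m, feasOf w C P →
      ∃ P' : Fin n → Fin m, feasOf w C P' ∧ costOf w f c P' ≤ costOf w f c P ∧
        ((∃ i, P' i = j0) → (∃ i, P' i = i0)) ∧
        loadOf w P' j0 ≤ loadOf w P' i0) ∧
    ((∃ P : Fin n → Fin m, feasOf w C P) →
      ∃ P : Fin n → Fin m, feasOf w C P ∧
        (∀ P' : Fin n → Fin m, feasOf w C P' → costOf w f c P ≤ costOf w f c P') ∧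
        ((∃ i, P i = j0) → (∃ i, P i = i0)) ∧
        loadOf w P j0 ≤ loadOf w P i0) := by
  classical
  have key : ∀ P : Fin n → Fin m, feasOf w C P →
      ∃ P' : Fin n → Fin m, feasOf w C P' ∧ costOf w f c P' ≤ costOf w f c P ∧
        ((∃ i, P' i = j0) → (∃ i, P' i = i0)) ∧
        loadOf w P' j0 ≤ loadOf w P' i0 := by
    intro P hP
    by_cases hle : loadOf w P j0 ≤ loadOf w P i0
    · refine ⟨P, hP, le_refl _, ?_, hle⟩
      intro hj
      have hjp := (used_iff_load_pos w hw P j0).1 hj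
      exact (used_iff_load_pos w hw P i0).2 (lt_of_lt_of_le hjp hle)
    · push_neg at hle
      set P' : Fin n → Fin m := fun i => Equiv.swap i0 j0 (P i) with hP'def
      have hload : ∀ k, loadOf w P' k = loadOf w P (Equiv.swap i0 j0 k) :=
        fun k => loadOf_swap w P i0 j0 k
      have hused : ∀ k, (∃ i, P' i = k) ↔ (∃ i, P i = Equiv.swap i0 j0 k) :=
        fun k => used_swap P i0 j0 k
      have hsi : Equiv.swap i0 j0 i0 = j0 := Equiv.swap_apply_left i0 j0
      have hsj : Equiv.swap i0 j0 j0 = i0 := Equiv.swap_apply_right i0 j0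
      have hli0 : loadOf w P' i0 = loadOf w P j0 := by rw [hload, hsi]
      have hlj0 : loadOf w P' j0 = loadOf w P i0 := by rw [hload, hsj]
      have hjused : ∃ i, P i = j0 := by
        apply (used_iff_load_pos w hw P j0).2
        exact lt_of_le_of_lt (loadOf_nonneg w hw P i0) hle
      refine ⟨P', ?_, ?_, ?_, ?_⟩
      · intro k
        by_cases hk1 : k = i0
        · rw [hk1, hli0]; exact le_trans (hP j0) hCd
        · by_cases hk2 : k = j0
          · rw [hk2, hlj0]
            exact le_trans hle.le (hP j0)
          · rw [hload, Equiv.swap_apply_of_ne_of_ne hk1 hk2]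
            exact hP k
      · rw [costOf_eq_sum_ite, costOf_eq_sum_ite]
        rw [← sub_nonneg, ← Finset.sum_sub_distrib]
        have hzero : ∀ k ∈ (univ : Finset (Fin m)), k ∉ ({i0, j0} : Finset (Fin m)) →
            ((if (∃ i, P i = k) then f k + c k * loadOf w P k else 0) -
             (if (∃ i, P' i = k) then f k + c k * loadOf w P' k else 0)) = 0 := by
          intro k _ hk
          simp only [mem_insert, mem_singleton, not_or] at hk
          have hs : Equiv.swap i0 j0 k = k :=
            Equiv.swap_apply_of_ne_of_ne hk.1 hk.2
          rw [hload]
          simp only [hused, hs, sub_self]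
        rw [← Finset.sum_subset (Finset.subset_univ ({i0, j0} : Finset (Fin m))) hzero,
          Finset.sum_pair hij]
        have huj' : (∃ i, P' i = j0) ↔ (∃ i, P i = i0) := by rw [hused, hsj]
        have hui' : (∃ i, P' i = i0) ↔ (∃ i, P i = j0) := by rw [hused, hsi]
        by_cases hiu : ∃ i, P i = i0
        · rw [if_pos hiu, if_pos (hui'.2 hjused), if_pos hjused, if_pos (huj'.2 hiu),
            hli0, hlj0]
          nlinarith [hle.le]
        · have hl0 : loadOf w P i0 = 0 := by
            have := (used_iff_load_pos w hw P i0).not.1 hiu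
            push_neg at this
            linarith [loadOf_nonneg w hw P i0]
          rw [if_neg hiu, if_pos (hui'.2 hjused), if_pos hjused, if_neg (huj'.not.2 hiu),
            hli0]
          have hlj : 0 ≤ loadOf w P j0 := loadOf_nonneg w hw P j0
          nlinarith
      · intro _
        exact (hused i0).2 (by rw [hsi]; exact hjused)
      · rw [hli0, hlj0]; exact hle.le
  refine ⟨key, ?_⟩
  rintro ⟨P0, hP0⟩
  obtain ⟨P, hPmem, hPmin⟩ := Finset.exists_min_image
    (univ.filter (fun P => feasOf w C P)) (costOf w f c) ⟨P0, by simp [hP0]⟩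
  simp only [mem_filter, mem_univ, true_and] at hPmem
  obtain ⟨P', h1, h2, h3, h4⟩ := key P hPmem
  exact ⟨P', h1, fun Q hQ => le_trans h2 (hPmin Q (by simp [hQ])), h3, h4⟩
end

section
/- Let gap = z̄ − Lb1', where z̄ is an upper bound on the optimal BPUC cost and Lb1' is the lower bound combining committed costs with Lb1 on the residual problem. For a bin a_j with j < k supporting L_j = C'_{a_j} units in Lb1, if q is the largest value in [0, L_j] such that Lb1(q, B'') − q·r_{a_j} ≤ gap, then in every feasible solution of cost at most z̄ the load of bin a_j is at least ℓ_{a_j,min} + L_j − q, where ℓ_{a_j,min} is the current lower bound on that bin's load. -/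
open Finset

/-- `knapMin r caps t` is the cheapest way (w.r.t. unit prices `r`) of placing `t` units
of load on bins with capacities `caps`; this is the continuous greedy bound `Lb1(t, ·)`. -/
noncomputable def knapMin (m : ℕ) (r caps : Fin m → ℝ) (t : ℝ) : ℝ :=
  sInf {z : ℝ | ∃ l : Fin m → ℝ,
    (∀ j, 0 ≤ l j ∧ l j ≤ caps j) ∧ (∑ j, l j) = t ∧ z = ∑ j, r j * l j}

lemma knapMin_le_feas (m : ℕ) (r caps : Fin m → ℝ) (hr : ∀ j, 0 ≤ r j)
    (l : Fin m → ℝ) (hl : ∀ j, 0 ≤ l j ∧ l j ≤ caps j) :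
    knapMin m r caps (∑ j, l j) ≤ ∑ j, r j * l j := by
  apply csInf_le
  · refine ⟨0, fun z hz => ?_⟩
    obtain ⟨l', hl', -, rfl⟩ := hz
    exact Finset.sum_nonneg fun i _ => mul_nonneg (hr i) (hl' i).1
  · exact ⟨l, hl, rfl, rfl⟩

/-- filtering rule for minimum loads.  With residual data `(W', B')`,
supporting loads `L`, critical index `k`, residual bins `B''`, and
`gap = z̄ − Lb1' = z̄ − (Z0 + Lb1(W', B'))`, let `q` be the largest value in `[0, L_j]`
(for `j < k`) with `Lb1(q, B'') − q·r_{a_j} ≤ gap`.  Then every feasible residual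
allocation `u` whose cost stays within `z̄` places at least `L_j − q` extra units on
bin `a_j`, i.e. its load is at least `ℓ_min + L_j − q`. -/
theorem stmt11 (m : ℕ) (C' f' c : Fin m → ℝ) (W' : ℝ)
    (hC : ∀ j, 0 < C' j) (hf : ∀ j, 0 ≤ f' j) (hc : ∀ j, 0 ≤ c j)
    (hW : 0 ≤ W') (hcap : W' ≤ ∑ j, C' j)
    (r : Fin m → ℝ) (hr : ∀ j, r j = f' j / C' j + c j)
    (a : Equiv.Perm (Fin m)) (ha : Monotone fun j => r (a j))
    (k : Fin m)
    (hk : W' ≤ ∑ j ∈ univ.filter (fun j => j ≤ k), C' (a j))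
    (hkmin : ∑ j ∈ univ.filter (fun j => j < k), C' (a j) < W')
    (L : Fin m → ℝ)
    (hL : ∀ j, L j =
      if j < k then C' (a j)
      else if j = k then W' - ∑ j' ∈ univ.filter (fun j' => j' < k), C' (a j')
      else 0)
    (C'' : Fin m → ℝ)
    (hC'' : ∀ j, C'' (a j) =
      if j < k then 0 else if j = k then C' (a k) - L k else C' (a j))
    (zbar Z0 gap : ℝ)
    (hgap : gap = zbar - (Z0 + knapMin m r C' W'))
    (j : Fin m) (hj : j < k)
    (q : ℝ)
    (hq : IsGreatest
      {t : ℝ | 0 ≤ t ∧ t ≤ L j ∧ knapMin m r C'' t - t * r (a j) ≤ gap} q)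
    (lmin : Fin m → ℝ)
    (u : Fin m → ℝ) (hu0 : ∀ i, 0 ≤ u i) (huC : ∀ i, u i ≤ C' i)
    (huW : ∑ i, u i = W')
    (hcost : Z0 + ∑ i, r i * u i ≤ zbar) :
    lmin (a j) + (L j - q) ≤ lmin (a j) + u (a j) := by
  have hr0 : ∀ i, 0 ≤ r i := fun i => by
    rw [hr]
    exact add_nonneg (div_nonneg (hf i) (hC i).le) (hc i)
  have hq0 : 0 ≤ q := hq.1.1
  -- set t
  set t : ℝ := L j - u (a j) with ht_def
  rcases le_or_gt t 0 with htle | htpos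
  · linarith
  -- main case: show t ≤ q
  -- sum split for filter ≤ k
  have hsplit : ∑ j' ∈ univ.filter (fun j' => j' ≤ k), C' (a j')
      = ∑ j' ∈ univ.filter (fun j' => j' < k), C' (a j') + C' (a k) := by
    have hins : univ.filter (fun j' => j' ≤ k) = insert k (univ.filter (fun j' => j' < k)) := by
      ext x
      simp [le_iff_lt_or_eq, or_comm]
    rw [hins, Finset.sum_insert (by simp)]
    ring
  -- L bounds
  have hLb : ∀ i, 0 ≤ L i ∧ L i ≤ C' (a i) := by
    intro i
    rw [hL i]
    rcases lt_trichotomy i k with h | h | h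
    · simp [h, (hC (a i)).le]
    · subst h
      rw [if_neg (lt_irrefl i), if_pos rfl]
      constructor
      · linarith
      · linarith
    · simp [not_lt.2 h.le, h.ne', (hC (a i)).le]
  -- L' : loads indexed by bins
  set L' : Fin m → ℝ := fun i => L (a.symm i) with hL'def
  have hL'a : ∀ i, L' (a i) = L i := fun i => by simp [hL'def]
  have hL's : ∀ i, L' i = L (a.symm i) := fun i => rfl
  have hLsum : ∑ i, L i = W' := by
    rw [← Finset.sum_filter_add_sum_filter_not univ (fun i => i < k) L]
    have h1 : ∑ i ∈ univ.filter (fun i => i < k), L i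
        = ∑ i ∈ univ.filter (fun i => i < k), C' (a i) := by
      refine Finset.sum_congr rfl fun i hi => ?_
      rw [hL i, if_pos (by simpa using hi)]
    have h2 : ∑ i ∈ univ.filter (fun i => ¬ i < k), L i = L k := by
      refine Finset.sum_eq_single_of_mem k (by simp) fun i hi hne => ?_
      rw [hL i, if_neg (by simpa using hi), if_neg hne]
    rw [h1, h2, hL k, if_neg (lt_irrefl k), if_pos rfl]
    ring
  have hL'sum : ∑ i, L' i = W' := by
    rw [hL'def, ← hLsum]
    exact Equiv.sum_comp a.symm L
  -- feasibility of L' for C'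
  have hL'feas : ∀ i, 0 ≤ L' i ∧ L' i ≤ C' i := by
    intro i
    have := hLb (a.symm i)
    rw [hL's]
    constructor
    · exact this.1
    · have := this.2
      simpa using this
  -- shortfall and excess
  set s : Fin m → ℝ := fun i => max (L' i - u i) 0 with hsdef
  set e : Fin m → ℝ := fun i => max (u i - L' i) 0 with hedef
  have hs0 : ∀ i, 0 ≤ s i := fun i => le_max_right _ _
  have he0 : ∀ i, 0 ≤ e i := fun i => le_max_right _ _
  have hes : ∀ i, e i - s i = u i - L' i := by
    intro i
    simp only [hsdef, hedef]
    rcases le_total (u i) (L' i) with h | h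
    · rw [max_eq_right (by linarith), max_eq_left (by linarith)]; ring
    · rw [max_eq_left (by linarith), max_eq_right (by linarith)]; ring
  set T : ℝ := ∑ i, e i with hTdef
  have hsT : ∑ i, s i = T := by
    have : ∑ i, (e i - s i) = 0 := by
      rw [Finset.sum_congr rfl fun i _ => hes i, Finset.sum_sub_distrib, huW, hL'sum]
      ring
    rw [Finset.sum_sub_distrib] at this
    linarith
  -- s at a j equals t
  have hsaj : s (a j) = t := by
    simp only [hsdef]
    rw [hL'a]
    exact max_eq_left htpos.le
  have htT : t ≤ T := by
    rw [← hsT, ← hsaj]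
    exact Finset.single_le_sum (fun i _ => hs0 i) (mem_univ (a j))
  have hT0 : 0 < T := lt_of_lt_of_le htpos htT
  -- price compare: shortfall bins have price ≤ r (a k)
  have hs_price : ∀ i, r i * s i ≤ r (a k) * s i := by
    intro i
    rcases le_or_gt (a.symm i) k with h | h
    · have : r i ≤ r (a k) := by
        have := ha h
        simpa using this
      exact mul_le_mul_of_nonneg_right this (hs0 i)
    · have hsz : s i = 0 := by
        simp only [hsdef]
        rw [hL's, hL (a.symm i), if_neg (not_lt.2 h.le), if_neg h.ne']
        exact max_eq_right (by linarith [hu0 i])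
      simp [hsz]
  -- excess bins have price ≥ r (a k)
  have he_price : ∀ i, r (a k) * e i ≤ r i * e i := by
    intro i
    rcases lt_or_ge (a.symm i) k with h | h
    · have hez : e i = 0 := by
        simp only [hedef]
        rw [hL's, hL (a.symm i), if_pos h]
        have : u i ≤ C' (a (a.symm i)) := by simpa using huC i
        exact max_eq_right (by linarith)
      simp [hez]
    · have : r (a k) ≤ r i := by
        have := ha h
        simpa using this
      exact mul_le_mul_of_nonneg_right this (he0 i)
  -- excess fits in C''
  have heC'' : ∀ i, e i ≤ C'' i := by
    intro i
    have hcc : C'' i = C'' (a (a.symm i)) := by simp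
    rw [hcc, hC'' (a.symm i)]
    rcases lt_trichotomy (a.symm i) k with h | h | h
    · rw [if_pos h]
      simp only [hedef]
      rw [hL's, hL (a.symm i), if_pos h]
      have : u i ≤ C' (a (a.symm i)) := by simpa using huC i
      exact le_of_eq (max_eq_right (by linarith))
    · rw [if_neg (by rw [h]; exact lt_irrefl k), if_pos h]
      simp only [hedef]
      rw [hL's, h]
      have h1 : u i ≤ C' (a k) := by
        have := huC i
        rw [← h] at *
        simpa using huC i
      have h2 : L k ≤ C' (a k) := (hLb k).2
      exact max_le (by linarith) (by linarith)
    · rw [if_neg (not_lt.2 h.le), if_neg h.ne']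
      simp only [hedef]
      rw [hL's, hL (a.symm i), if_neg (not_lt.2 h.le), if_neg h.ne']
      have : u i ≤ C' (a (a.symm i)) := by simpa using huC i
      exact max_le (by linarith) (hC _).le
  -- cost bounds
  set Sre : ℝ := ∑ i, r i * e i with hSredef
  set Srs : ℝ := ∑ i, r i * s i with hSrsdef
  have hSre_lb : r (a k) * T ≤ Sre := by
    rw [hTdef, Finset.mul_sum]
    exact Finset.sum_le_sum fun i _ => he_price i
  have hSre0 : 0 ≤ Sre :=
    Finset.sum_nonneg fun i _ => mul_nonneg (hr0 i) (he0 i)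
  -- sum over erase for shortfall
  have hSrs_ub : Srs ≤ r (a j) * t + r (a k) * (T - t) := by
    have h1 : Srs = r (a j) * s (a j) + ∑ i ∈ univ.erase (a j), r i * s i := by
      rw [hSrsdef, ← Finset.add_sum_erase _ _ (mem_univ (a j))]
    have h2 : ∑ i ∈ univ.erase (a j), r i * s i ≤ ∑ i ∈ univ.erase (a j), r (a k) * s i :=
      Finset.sum_le_sum fun i _ => hs_price i
    have h3 : ∑ i ∈ univ.erase (a j), r (a k) * s i = r (a k) * (T - s (a j)) := by
      rw [← Finset.mul_sum]
      congr 1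
      have := Finset.add_sum_erase univ s (mem_univ (a j))
      rw [hsT] at this
      linarith
    rw [h1, hsaj]
    rw [hsaj] at h3
    linarith
  -- cost identity
  have hcost_id : Sre - Srs = (∑ i, r i * u i) - ∑ i, r i * L' i := by
    rw [hSredef, hSrsdef, ← Finset.sum_sub_distrib, ← Finset.sum_sub_distrib]
    refine Finset.sum_congr rfl fun i _ => ?_
    linear_combination (r i) * hes i
  -- knapMin bounds
  have hknapC' : knapMin m r C' W' ≤ ∑ i, r i * L' i := by
    have := knapMin_le_feas m r C' hr0 L' hL'feas
    rwa [hL'sum] at this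
  -- feasible allocation for C''
  set v : Fin m → ℝ := fun i => (t / T) * e i with hvdef
  have hvfeas : ∀ i, 0 ≤ v i ∧ v i ≤ C'' i := by
    intro i
    have htT0 : 0 ≤ t / T := div_nonneg htpos.le hT0.le
    have htT1 : t / T ≤ 1 := (div_le_one hT0).2 htT
    constructor
    · exact mul_nonneg htT0 (he0 i)
    · calc (t / T) * e i ≤ 1 * e i := mul_le_mul_of_nonneg_right htT1 (he0 i)
        _ = e i := one_mul _
        _ ≤ C'' i := heC'' i
  have hvsum : ∑ i, v i = t := by
    rw [hvdef, ← Finset.mul_sum, ← hTdef]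
    field_simp
  have hknapC'' : knapMin m r C'' t ≤ (t / T) * Sre := by
    have := knapMin_le_feas m r C'' hr0 v hvfeas
    rw [hvsum] at this
    calc knapMin m r C'' t ≤ ∑ i, r i * v i := this
      _ = (t / T) * Sre := by
          rw [hSredef, Finset.mul_sum]
          exact Finset.sum_congr rfl fun i _ => by rw [hvdef]; ring
  have hscale : (t / T) * Sre ≤ Sre - r (a k) * (T - t) := by
    have h1 : (T - t) * (r (a k) * T) ≤ (T - t) * Sre :=
      mul_le_mul_of_nonneg_left hSre_lb (by linarith)
    have h2 : (t / T) * Sre * T = t * Sre := by field_simp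
    nlinarith [hT0]
  -- assemble membership
  have hmem : t ∈ {t : ℝ | 0 ≤ t ∧ t ≤ L j ∧ knapMin m r C'' t - t * r (a j) ≤ gap} := by
    refine ⟨htpos.le, by simp only [ht_def]; linarith [hu0 (a j)], ?_⟩
    have hchain : knapMin m r C'' t ≤ (∑ i, r i * u i) - knapMin m r C' W' + t * r (a j) := by
      calc knapMin m r C'' t ≤ (t / T) * Sre := hknapC''
        _ ≤ Sre - r (a k) * (T - t) := hscale
        _ ≤ Sre - (Srs - r (a j) * t) := by linarith
        _ = ((∑ i, r i * u i) - ∑ i, r i * L' i) + r (a j) * t := by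
            rw [← hcost_id]; ring
        _ ≤ (∑ i, r i * u i) - knapMin m r C' W' + t * r (a j) := by
            have := hknapC'
            linarith [mul_comm (r (a j)) t]
    rw [hgap]
    linarith
  have : t ≤ q := hq.2 hmem
  linarith
end

section
/- With the same residual setup, for a bin a_j with j ≥ k, if q is the largest value in [0, C'_{a_j}] such that q·r_{a_j} − (Lb1(W', B') − Lb1(W' − q, B')) ≤ gap, then in every feasible solution of cost at most z̄ the load of bin a_j is at most ℓ_{a_j,min} + q; loading a_j by more than q would force total cost to exceed z̄. -/
open Finset

lemma knapMin_le_of_feasible (m : ℕ) (r caps : Fin m → ℝ) (hr0 : ∀ i, 0 ≤ r i)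
    (l : Fin m → ℝ) (hl : ∀ i, 0 ≤ l i ∧ l i ≤ caps i) :
    knapMin m r caps (∑ i, l i) ≤ ∑ i, r i * l i := by
  apply csInf_le
  · refine ⟨0, ?_⟩
    rintro z ⟨l', hl', -, rfl⟩
    exact Finset.sum_nonneg fun i _ => mul_nonneg (hr0 i) (hl' i).1
  · exact ⟨l, hl, rfl, rfl⟩

/-- filtering rule for maximum loads.  With residual data `(W', B')`,
critical index `k`, and `gap = z̄ − (Z0 + Lb1(W', B'))`, let `q` be the largest value in
`[0, C'_{a_j}]` (for `j ≥ k`) with `q·r_{a_j} − (Lb1(W', B') − Lb1(W' − q, B')) ≤ gap`.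
Then every feasible residual allocation `u` whose cost stays within `z̄` places at most
`q` extra units on bin `a_j`, i.e. its load is at most `ℓ_min + q`. -/
theorem stmt12 (m : ℕ) (C' f' c : Fin m → ℝ) (W' : ℝ)
    (hC : ∀ j, 0 < C' j) (hf : ∀ j, 0 ≤ f' j) (hc : ∀ j, 0 ≤ c j)
    (hW : 0 ≤ W') (hcap : W' ≤ ∑ j, C' j)
    (r : Fin m → ℝ) (hr : ∀ j, r j = f' j / C' j + c j)
    (a : Equiv.Perm (Fin m)) (ha : Monotone fun j => r (a j))
    (k : Fin m)
    (hk : W' ≤ ∑ j ∈ univ.filter (fun j => j ≤ k), C' (a j))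
    (hkmin : ∑ j ∈ univ.filter (fun j => j < k), C' (a j) < W')
    (zbar Z0 gap : ℝ)
    (hgap : gap = zbar - (Z0 + knapMin m r C' W'))
    (j : Fin m) (hj : k ≤ j)
    (q : ℝ)
    (hq : IsGreatest
      {t : ℝ | 0 ≤ t ∧ t ≤ C' (a j) ∧
        t * r (a j) - (knapMin m r C' W' - knapMin m r C' (W' - t)) ≤ gap} q)
    (lmin : Fin m → ℝ)
    (u : Fin m → ℝ) (hu0 : ∀ i, 0 ≤ u i) (huC : ∀ i, u i ≤ C' i)
    (huW : ∑ i, u i = W')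
    (hcost : Z0 + ∑ i, r i * u i ≤ zbar) :
    lmin (a j) + u (a j) ≤ lmin (a j) + q := by
  have hr0 : ∀ i, 0 ≤ r i := fun i => by
    rw [hr i]; exact add_nonneg (div_nonneg (hf i) (hC i).le) (hc i)
  have hsum : ∑ i, r i * u i ≤ zbar - Z0 := by linarith
  -- u itself witnesses knapMin W' ≤ cost u
  have h1 : knapMin m r C' W' ≤ ∑ i, r i * u i := by
    have := knapMin_le_of_feasible m r C' hr0 u (fun i => ⟨hu0 i, huC i⟩)
    rwa [huW] at this
  -- removing the load on a j witnesses knapMin (W' - u (a j)) ≤ cost u - r (a j) * u (a j)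
  set v : Fin m → ℝ := Function.update u (a j) 0 with hv
  have hvfeas : ∀ i, 0 ≤ v i ∧ v i ≤ C' i := by
    intro i
    by_cases h : i = a j
    · subst h; simp [hv, (hC (a j)).le]
    · simp [hv, Function.update_of_ne h, hu0 i, huC i]
  have hvsum : ∑ i, v i = W' - u (a j) := by
    rw [hv, Finset.sum_update_of_mem (Finset.mem_univ _)]
    rw [Finset.sum_sdiff_eq_sub (Finset.subset_univ _), Finset.sum_singleton, huW]; ring
  have hvcost : ∑ i, r i * v i = (∑ i, r i * u i) - r (a j) * u (a j) := by
    have : (fun i => r i * v i) = Function.update (fun i => r i * u i) (a j) 0 := by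
      funext i
      by_cases h : i = a j
      · subst h; simp [hv]
      · simp [hv, Function.update_of_ne h]
    rw [this, Finset.sum_update_of_mem (Finset.mem_univ _)]
    rw [Finset.sum_sdiff_eq_sub (Finset.subset_univ _), Finset.sum_singleton]; ring
  have h2 : knapMin m r C' (W' - u (a j)) ≤ (∑ i, r i * u i) - r (a j) * u (a j) := by
    have := knapMin_le_of_feasible m r C' hr0 v hvfeas
    rwa [hvsum, hvcost] at this
  have hmem : u (a j) ∈ {t : ℝ | 0 ≤ t ∧ t ≤ C' (a j) ∧
      t * r (a j) - (knapMin m r C' W' - knapMin m r C' (W' - t)) ≤ gap} := by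
    refine ⟨hu0 _, huC _, ?_⟩
    rw [hgap]; linarith
  have := hq.2 hmem
  linarith
end

section
/- Given Lb1 computed on residual data (W', B') with supporting loads L_1,…,L_m and critical index k, Algorithm UpdateMinimumLoad run on bin a_j with j ≤ k returns a valid lower bound on l_{a_j}: it computes the maximum transferable quantity q⁻ by filling the cheapest alternative bins a_b (b ≥ k, or b ≥ k+1 if j = k) and accumulating incremental cost loadAdd·(r_{a_b} − r_{a_j}) until the gap is exhausted, and the returned value ℓ_min + L_j − q⁻ never exceeds the load of bin a_j in any solution of cost ≤ z̄. The algorithm runs in O(m) time. -/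
open Finset

/-- soundness of Algorithm `UpdateMinimumLoad`.  For a bin `a_j` with
`j ≤ k`, the algorithm greedily transfers load from `a_j` to the free capacities
`C'_{a_b} − L_b` of the bins `a_b` with `b ≥ k` (`b ≥ k+1` when `j = k`), each unit
transferred to `a_b` costing `r_{a_b} − r_{a_j}`; `q⁻` is the largest amount in
`[0, L_j]` transferable within the remaining `gap`.  The returned value
`ℓ_min + L_j − q⁻` never exceeds the load of bin `a_j` in any solution of cost ≤ `z̄`. -/
theorem stmt18 (m : ℕ) (C' f' c : Fin m → ℝ) (W' : ℝ)
    (hC : ∀ j, 0 < C' j) (hf : ∀ j, 0 ≤ f' j) (hc : ∀ j, 0 ≤ c j)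
    (hW : 0 ≤ W') (hcap : W' ≤ ∑ j, C' j)
    (r : Fin m → ℝ) (hr : ∀ j, r j = f' j / C' j + c j)
    (a : Equiv.Perm (Fin m)) (ha : Monotone fun j => r (a j))
    (k : Fin m)
    (hk : W' ≤ ∑ j ∈ univ.filter (fun j => j ≤ k), C' (a j))
    (hkmin : ∑ j ∈ univ.filter (fun j => j < k), C' (a j) < W')
    (L : Fin m → ℝ)
    (hL : ∀ j, L j =
      if j < k then C' (a j)
      else if j = k then W' - ∑ j' ∈ univ.filter (fun j' => j' < k), C' (a j')
      else 0)
    (zbar Z0 gap : ℝ)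
    (hgap : gap = zbar - (Z0 + knapMin m r C' W'))
    (j : Fin m) (hj : j ≤ k)
    -- free capacities available to receive transferred load, as scanned by the
    -- algorithm: bins `a_b` with `b ≥ k` (with `b ≥ k+1`, i.e. `b > k`, when `j = k`)
    (freeCap : Fin m → ℝ)
    (hfree : ∀ b, freeCap b =
      if (j < k ∧ k ≤ b) ∨ (j = k ∧ k < b) then C' (a b) - L b else 0)
    -- per-unit extra cost of transferring load from bin `a_j` to bin `a_b`
    (rshift : Fin m → ℝ) (hrshift : ∀ b, rshift b = r (a b) - r (a j))
    (qminus : ℝ)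
    (hq : IsGreatest
      {t : ℝ | 0 ≤ t ∧ t ≤ L j ∧ knapMin m rshift freeCap t ≤ gap} qminus)
    (lmin : Fin m → ℝ)
    (u : Fin m → ℝ) (hu0 : ∀ i, 0 ≤ u i) (huC : ∀ i, u i ≤ C' i)
    (huW : ∑ i, u i = W')
    (hcost : Z0 + ∑ i, r i * u i ≤ zbar) :
    lmin (a j) + (L j - qminus) ≤ lmin (a j) + u (a j) := by
  have hq0 : 0 ≤ qminus := hq.1.1
  have hv : 0 ≤ u (a j) := hu0 _
  rcases le_or_gt (L j - u (a j)) 0 with hLe | ht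
  · linarith
  -- setup
  have hrnn : ∀ i, 0 ≤ r i := fun i => by
    rw [hr]; exact add_nonneg (div_nonneg (hf i) (hC i).le) (hc i)
  have hfilter : (univ.filter (fun j' : Fin m => j' ≤ k))
      = insert k (univ.filter (fun j' => j' < k)) := by
    ext b; simp; omega
  have hknotmem : k ∉ univ.filter (fun j' : Fin m => j' < k) := by simp
  have hk' : W' ≤ C' (a k) + ∑ j' ∈ univ.filter (fun j' : Fin m => j' < k), C' (a j') := by
    rw [hfilter, Finset.sum_insert hknotmem] at hk; exact hk
  have hLbounds : ∀ b, 0 ≤ L b ∧ L b ≤ C' (a b) := by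
    intro b; rw [hL b]; split_ifs with h1 h2
    · exact ⟨(hC _).le, le_rfl⟩
    · subst h2; constructor <;> linarith
    · exact ⟨le_rfl, (hC _).le⟩
  have hLsum : ∑ b, L b = W' := by
    have h1 : ∑ b ∈ univ.filter (fun b : Fin m => b ≤ k), L b = ∑ b, L b := by
      apply Finset.sum_filter_of_ne
      intro b _ hLb
      by_contra hbk
      apply hLb
      rw [hL b, if_neg (by omega), if_neg (by omega)]
    rw [← h1, hfilter, Finset.sum_insert hknotmem, hL k, if_neg (lt_irrefl k), if_pos rfl]
    have h2 : ∑ b ∈ univ.filter (fun b : Fin m => b < k), L b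
        = ∑ b ∈ univ.filter (fun b : Fin m => b < k), C' (a b) := by
      apply Finset.sum_congr rfl
      intro b hb
      rw [hL b, if_pos (by simpa using hb)]
    rw [h2]; ring
  set S : Finset (Fin m) :=
    univ.filter (fun b => (j < k ∧ k ≤ b) ∨ (j = k ∧ k < b)) with hS
  have hjS : j ∉ S := by
    simp only [hS, Finset.mem_filter, Finset.mem_univ, true_and]; omega
  have hfree_S : ∀ b ∈ S, freeCap b = C' (a b) - L b := by
    intro b hb
    rw [hfree b, if_pos]
    simpa [hS] using hb
  have hfree_nS : ∀ b, b ∉ S → freeCap b = 0 := by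
    intro b hb
    rw [hfree b, if_neg]
    simpa [hS] using hb
  have hfree0 : ∀ b, 0 ≤ freeCap b := by
    intro b
    by_cases hb : b ∈ S
    · rw [hfree_S b hb]; linarith [(hLbounds b).2]
    · rw [hfree_nS b hb]
  have hrs_nonneg : ∀ b ∈ S, 0 ≤ rshift b := by
    intro b hb
    have hjb : j ≤ b := by
      have := Finset.mem_filter.mp hb
      omega
    rw [hrshift b]
    have := ha hjb
    simpa [sub_nonneg] using this
  -- the candidate transfer amount
  set t : ℝ := L j - u (a j) with htdef
  set mcap : Fin m → ℝ := fun b => min (freeCap b) (u (a b)) with hmcap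
  have hm0 : ∀ b, 0 ≤ mcap b := fun b => le_min (hfree0 b) (hu0 _)
  have hmj : mcap j = 0 := by
    simp only [hmcap]
    rw [hfree_nS j hjS]
    exact min_eq_left hv
  -- total transferable capacity is at least t
  have hvsum : ∑ b, u (a b) = W' := by rw [Equiv.sum_comp a u, huW]
  have hTt : t ≤ ∑ b, mcap b := by
    set Sj : Finset (Fin m) := insert j S with hSj
    have hcomp : ∀ b ∈ Sjᶜ, u (a b) ≤ L b := by
      intro b hb
      have hb' : b ∉ Sj := Finset.mem_compl.mp hb
      have hbj : b ≠ j := by rintro rfl; exact hb' (Finset.mem_insert_self _ _)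
      have hbS : b ∉ S := fun h => hb' (Finset.mem_insert_of_mem h)
      have hbS' : ¬ ((j < k ∧ k ≤ b) ∨ (j = k ∧ k < b)) := by
        simpa [hS] using hbS
      have hbk : b < k := by omega
      rw [hL b, if_pos hbk]
      exact huC _
    have h1 : ∑ b ∈ Sjᶜ, u (a b) ≤ ∑ b ∈ Sjᶜ, L b := Finset.sum_le_sum hcomp
    have h2 : ∑ b ∈ Sj, L b + ∑ b ∈ Sjᶜ, L b = W' := by
      rw [Finset.sum_add_sum_compl, hLsum]
    have h3 : ∑ b ∈ Sj, u (a b) + ∑ b ∈ Sjᶜ, u (a b) = W' := by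
      rw [Finset.sum_add_sum_compl, hvsum]
    have hkey : ∑ b ∈ Sj, L b ≤ ∑ b ∈ Sj, u (a b) := by linarith
    rw [hSj, Finset.sum_insert hjS, Finset.sum_insert hjS] at hkey
    have h4 : ∑ b ∈ S, (u (a b) - L b) ≤ ∑ b ∈ S, mcap b := by
      apply Finset.sum_le_sum
      intro b hb
      apply le_min
      · rw [hfree_S b hb]
        have := huC (a b)
        linarith
      · linarith [(hLbounds b).1]
    have h5 : ∑ b ∈ S, mcap b ≤ ∑ b, mcap b :=
      Finset.sum_le_sum_of_subset_of_nonneg (Finset.subset_univ _) (fun b _ _ => hm0 b)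
    rw [Finset.sum_sub_distrib] at h4
    simp only [htdef]
    linarith
  set T : ℝ := ∑ b, mcap b with hTdef
  have hTpos : 0 < T := lt_of_lt_of_le ht hTt
  set l' : Fin m → ℝ := fun b => (t / T) * mcap b with hl'
  have hdiv1 : t / T ≤ 1 := (div_le_one hTpos).mpr hTt
  have hdiv0 : 0 ≤ t / T := div_nonneg ht.le hTpos.le
  have hl'0 : ∀ b, 0 ≤ l' b := fun b => mul_nonneg hdiv0 (hm0 b)
  have hl'm : ∀ b, l' b ≤ mcap b := fun b => by
    calc (t / T) * mcap b ≤ 1 * mcap b :=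
          mul_le_mul_of_nonneg_right hdiv1 (hm0 b)
      _ = mcap b := one_mul _
  have hl'sum : ∑ b, l' b = t := by
    rw [hl']
    rw [← Finset.mul_sum, ← hTdef]
    field_simp
  have hl'j : l' j = 0 := by rw [hl']; simp [hmj]
  -- the modified solution
  set w : Fin m → ℝ := fun b => u (a b) - l' b + (if b = j then t else 0) with hw
  have hw0 : ∀ b, 0 ≤ w b := by
    intro b
    by_cases hb : b = j
    · subst hb
      have := (hLbounds b).1
      simp only [hw, if_pos rfl, hl'j, htdef, if_true]
      linarith
    · have h1 := hl'm b
      have h2 : mcap b ≤ u (a b) := min_le_right _ _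
      simp only [hw, if_neg hb]
      linarith
  have hwC : ∀ b, w b ≤ C' (a b) := by
    intro b
    by_cases hb : b = j
    · subst hb
      have := (hLbounds b).2
      simp only [hw, if_pos rfl, hl'j, htdef, if_true]
      linarith
    · have h3 := huC (a b)
      have h4 := hl'0 b
      simp only [hw, if_neg hb]
      linarith
  have hitesum : ∑ b, (if b = j then t else 0) = t := by simp
  have hwsum : ∑ b, w b = W' := by
    rw [hw]
    rw [Finset.sum_add_distrib, Finset.sum_sub_distrib, hvsum, hl'sum, hitesum]
    ring
  -- membership bounds for the two knapsack infima
  have hknap1 : knapMin m r C' W' ≤ ∑ b, r (a b) * w b := by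
    apply csInf_le
    · refine ⟨0, ?_⟩
      rintro z ⟨l, hl, -, rfl⟩
      exact Finset.sum_nonneg fun i _ => mul_nonneg (hrnn i) (hl i).1
    · refine ⟨fun i => w (a.symm i), fun i => ⟨hw0 _, by simpa using hwC (a.symm i)⟩, ?_, ?_⟩
      · rw [Equiv.sum_comp a.symm w, hwsum]
      · have := Equiv.sum_comp a (fun i => r i * w (a.symm i))
        simp only [Equiv.symm_apply_apply] at this
        simpa using this
  have hknap2 : knapMin m rshift freeCap t ≤ ∑ b, rshift b * l' b := by
    apply csInf_le
    · refine ⟨0, ?_⟩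
      rintro z ⟨l, hl, -, rfl⟩
      apply Finset.sum_nonneg
      intro b _
      by_cases hb : b ∈ S
      · exact mul_nonneg (hrs_nonneg b hb) (hl b).1
      · have hlz : l b = 0 :=
          le_antisymm ((hl b).2.trans_eq (hfree_nS b hb)) (hl b).1
        rw [hlz, mul_zero]
    · exact ⟨l', fun b => ⟨hl'0 b, (hl'm b).trans (min_le_left _ _)⟩, hl'sum, rfl⟩
  -- cost accounting
  have e1 : ∑ b, r (a b) * u (a b) = ∑ i, r i * u i :=
    Equiv.sum_comp a fun i => r i * u i
  have e2 : ∑ b, rshift b * l' b = ∑ b, r (a b) * l' b - r (a j) * t := by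
    simp only [hrshift, sub_mul]
    rw [Finset.sum_sub_distrib, ← Finset.mul_sum, hl'sum]
  have e3 : ∑ b, r (a b) * w b
      = ∑ b, r (a b) * u (a b) - ∑ b, r (a b) * l' b + r (a j) * t := by
    simp only [hw, mul_add, mul_sub]
    rw [Finset.sum_add_distrib, Finset.sum_sub_distrib]
    congr 1
    simp [mul_ite, mul_zero]
  -- conclude membership of t and finish
  have hmem : t ∈ {t : ℝ | 0 ≤ t ∧ t ≤ L j ∧ knapMin m rshift freeCap t ≤ gap} := by
    refine ⟨ht.le, by simp only [htdef]; linarith, ?_⟩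
    have : ∑ b, rshift b * l' b = ∑ i, r i * u i - ∑ b, r (a b) * w b := by
      rw [e2, e3, e1]; ring
    rw [hgap]
    linarith
  have := hq.2 hmem
  simp only [htdef] at this
  linarith
end
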